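/- arXiv:1808.00182 — 11 statements merged into one kernel-verified Lean document; each statement's English description precedes it below -/
import Mathlib

section
/- If α ≥ 0 satisfies 2α ≤ 1, then for all y > 0, 1 - e^{-y(1+αy)} < y. -/
/-!
Since `α ≤ 1/2`, the exponent satisfies `y (1 + α y) ≤ y + y²/2`. For `y ≥ 1` the claim is
trivial; for `0 < y < 1` the Mercator series `-log (1 - y) = ∑ yⁿ⁺¹/(n+1)` has positive terms,
so `-log (1 - y) > y + y²/2`, i.e. `1 - y < exp (-(y + y²/2))`.
-/

open Real Finset

lemma Real.add_sq_div_two_lt_neg_log_one_sub {x : ℝ} (hx0 : 0 < x) (hx1 : x < 1) :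
    x + x ^ 2 / 2 < -log (1 - x) := by
  have hsum := hasSum_pow_div_log_of_abs_lt_one (by rwa [abs_of_pos hx0])
  have hpartial : ∑ i ∈ range 3, x ^ (i + 1) / (i + 1 : ℝ) ≤ -log (1 - x) :=
    sum_le_hasSum _ (fun i _ => by positivity) hsum
  simp only [sum_range_succ, sum_range_zero] at hpartial
  norm_num at hpartial
  linarith [pow_pos hx0 3]

lemma Real.one_sub_lt_exp_neg_add_sq_div_two {x : ℝ} (hx : 0 < x) :
    1 - x < exp (-(x + x ^ 2 / 2)) := by
  rcases le_or_gt 1 x with hx1 | hx1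
  · linarith [exp_pos (-(x + x ^ 2 / 2))]
  · calc 1 - x = exp (log (1 - x)) := (exp_log (by linarith)).symm
      _ < exp (-(x + x ^ 2 / 2)) := by
        rw [exp_lt_exp]
        linarith [add_sq_div_two_lt_neg_log_one_sub hx hx1]

theorem capture_prob_lt_general (α : ℝ) (hα2 : 2 * α ≤ 1) :
    ∀ y : ℝ, 0 < y → 1 - Real.exp (-(y * (1 + α * y))) < y := by
  intro y hy
  have hexponent : y * (1 + α * y) ≤ y + y ^ 2 / 2 := by nlinarith [sq_nonneg y]
  have hmono : exp (-(y + y ^ 2 / 2)) ≤ exp (-(y * (1 + α * y))) :=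
    exp_le_exp.mpr (neg_le_neg hexponent)
  linarith [one_sub_lt_exp_neg_add_sq_div_two hy]

theorem capture_prob_lt (α : ℝ) (hα : 0 ≤ α) (hα2 : 2 * α ≤ 1) :
    ∀ y : ℝ, 0 < y → 1 - Real.exp (-(y * (1 + α * y))) < y :=
  capture_prob_lt_general α hα2
end

section
/- Let α ≥ 0 with 2α ≤ 1 and define g(y) = e^{y(1+αy)} - 1 - y(1+2αy). Then g(y) > 0 for all y > 0. -/
/-!
With `u = y (1 + α y)` we have `g(y) = (exp u - 1 - u - u² / 2) + (u² / 2 - α y²)`. The first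
term is positive since `u > 0`, the second is nonnegative since `u ≥ y` and `2 α ≤ 1`.
-/

open Real

theorem Real.quadratic_lt_exp_of_pos {x : ℝ} (hx : 0 < x) : 1 + x + x ^ 2 / 2 < exp x := by
  have h := sum_le_exp_of_nonneg hx.le 4
  simp only [Finset.sum_range_succ, Finset.sum_range_zero, Nat.factorial] at h
  push_cast at h
  nlinarith [pow_pos hx 3]

theorem g_pos (α : ℝ) (hα : 0 ≤ α) (hα2 : 2 * α ≤ 1) :
    ∀ y : ℝ, 0 < y →
      0 < Real.exp (y * (1 + α * y)) - 1 - y * (1 + 2 * α * y) := by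
  intro y hy
  have hyu : y ≤ y * (1 + α * y) := by nlinarith [mul_nonneg hα (mul_self_nonneg y)]
  have hsq : 2 * α * y ^ 2 ≤ (y * (1 + α * y)) ^ 2 :=
    calc 2 * α * y ^ 2 ≤ y ^ 2 := by nlinarith [sq_nonneg y]
      _ ≤ (y * (1 + α * y)) ^ 2 := pow_le_pow_left₀ hy.le hyu 2
  have hexp := quadratic_lt_exp_of_pos (hy.trans_le hyu)
  linarith
end

section
/- Let β > 0 and α ≥ 0 with 2α ≤ 1. The function h(y) = y/(β(1 - e^{-y(1+αy)})) for y > 0, extended by h(0) = 1/β, is strictly increasing on [0, ∞) and tends to ∞ as y → ∞. -/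
/-!
Write `F y = 1 - exp (-(y * (1 + α * y)))`. Then
`F'' y = (2α - (1 + 2αy)²) exp (-(y * (1 + α * y)))`, which is negative for `y > 0` as soon as
`2α ≤ 1`, so `F` is strictly concave on `[0, ∞)`. Hence the difference quotient `F y / y`,
extended by `F' 0 = 1` at `y = 0`, is strictly decreasing and positive there, and `h` is
`1 / β` divided by it. Since `F < 1`, moreover `h y ≥ y / β`.
-/

open Real Set Filter

theorem StrictConcaveOn.strictAntiOn_dslope {S : Set ℝ} {f : ℝ → ℝ} {a : ℝ}
    (hf : StrictConcaveOn ℝ S f) (ha : a ∈ S) (hfa : DifferentiableAt ℝ f a) :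
    StrictAntiOn (dslope f a) S := by
  intro x hx y hy hxy
  rcases eq_or_ne x a with rfl | hxa
  · rw [dslope_same, dslope_of_ne f hxy.ne']
    exact hf.slope_lt_deriv hx hy hxy hfa
  rcases eq_or_ne y a with rfl | hya
  · rw [dslope_same, dslope_of_ne f hxa, slope_comm]
    exact hf.deriv_lt_slope hx hy hxy hfa
  rw [dslope_of_ne f hxa, dslope_of_ne f hya, slope_def_field, slope_def_field]
  exact hf.secant_strict_mono ha hx hy hxa hya hxy

theorem hasDerivAt_neg_mul_one_add_mul (α x : ℝ) :
    HasDerivAt (fun y => -(y * (1 + α * y))) (-(1 + 2 * α * x)) x := by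
  refine ((hasDerivAt_id' x).mul (((hasDerivAt_id' x).const_mul α).const_add 1)).neg.congr_deriv ?_
  ring

noncomputable def predationFraction (α y : ℝ) : ℝ := 1 - exp (-(y * (1 + α * y)))

namespace predationFraction

theorem hasDerivAt (α x : ℝ) :
    HasDerivAt (predationFraction α) ((1 + 2 * α * x) * exp (-(x * (1 + α * x)))) x :=
  ((hasDerivAt_neg_mul_one_add_mul α x).exp.const_sub 1).congr_deriv (by ring)

theorem deriv_eq (α : ℝ) :
    deriv (predationFraction α) = fun x => (1 + 2 * α * x) * exp (-(x * (1 + α * x))) :=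
  funext fun x => (hasDerivAt α x).deriv

theorem hasDerivAt_deriv (α x : ℝ) :
    HasDerivAt (deriv (predationFraction α))
      ((2 * α - (1 + 2 * α * x) ^ 2) * exp (-(x * (1 + α * x)))) x := by
  have hq := hasDerivAt_neg_mul_one_add_mul α x
  rw [deriv_eq]
  refine ((((hasDerivAt_id' x).const_mul (2 * α)).const_add 1).mul hq.exp).congr_deriv ?_
  ring

theorem strictConcaveOn {α : ℝ} (hα : 0 ≤ α) (hα2 : 2 * α ≤ 1) :
    StrictConcaveOn ℝ (Ici 0) (predationFraction α) := by
  refine strictConcaveOn_of_deriv2_neg (convex_Ici 0) ?_ fun x hx => ?_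
  · unfold predationFraction; fun_prop
  rw [interior_Ici, mem_Ioi] at hx
  rw [Function.iterate_succ_apply, Function.iterate_one, (hasDerivAt_deriv α x).deriv]
  refine mul_neg_of_neg_of_pos ?_ (exp_pos _)
  rcases hα.eq_or_lt with rfl | hα0
  · norm_num
  · nlinarith [mul_pos hα0 hx]

theorem pos {α y : ℝ} (hα : 0 ≤ α) (hy : 0 < y) : 0 < predationFraction α y := by
  unfold predationFraction
  have : 0 < y * (1 + α * y) := by positivity
  linarith [exp_lt_one_iff.mpr (neg_neg_of_pos this)]

theorem lt_one (α y : ℝ) : predationFraction α y < 1 := by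
  unfold predationFraction
  linarith [exp_pos (-(y * (1 + α * y)))]

theorem dslope_zero (α y : ℝ) :
    dslope (predationFraction α) 0 y = if y = 0 then 1 else predationFraction α y / y := by
  split_ifs with hy
  · simp [hy, dslope_same, deriv_eq]
  · simp [dslope_of_ne _ hy, slope_def_field, predationFraction]

theorem dslope_zero_pos {α y : ℝ} (hα : 0 ≤ α) (hy : 0 ≤ y) :
    0 < dslope (predationFraction α) 0 y := by
  rw [dslope_zero]
  split_ifs with hy0
  · exact one_pos
  · exact div_pos (pos hα (hy.lt_of_ne' hy0)) (hy.lt_of_ne' hy0)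

end predationFraction

theorem y_isocline_strictMono (α β : ℝ) (hα : 0 ≤ α) (hα2 : 2 * α ≤ 1) (hβ : 0 < β) :
    let h : ℝ → ℝ := fun y =>
      if y = 0 then 1 / β else y / (β * (1 - Real.exp (-(y * (1 + α * y)))))
    StrictMonoOn h (Set.Ici 0) ∧ Filter.Tendsto h Filter.atTop Filter.atTop := by
  intro h
  have h_eq : h = fun y => (β * dslope (predationFraction α) 0 y)⁻¹ := by
    funext y
    rw [predationFraction.dslope_zero]
    split_ifs with hy
    · simp [h, hy]
    · simp only [h, if_neg hy, predationFraction, mul_div_assoc', inv_div]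
  have h_ge : ∀ y > 0, y / β ≤ h y := fun y hy => by
    simp only [h, if_neg hy.ne']
    exact div_le_div_of_nonneg_left hy.le (mul_pos hβ (predationFraction.pos hα hy))
      (mul_le_of_le_one_right hβ.le (predationFraction.lt_one α y).le)
  refine ⟨fun x hx y hy hxy => ?_, tendsto_atTop_mono' _ ?_ (tendsto_id.atTop_div_const hβ)⟩
  · have hF := (predationFraction.strictConcaveOn hα hα2).strictAntiOn_dslope self_mem_Ici
      (predationFraction.hasDerivAt α 0).differentiableAt hx hy hxy
    rw [h_eq]
    exact (inv_lt_inv₀ (mul_pos hβ (predationFraction.dslope_zero_pos hα hx))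
      (mul_pos hβ (predationFraction.dslope_zero_pos hα hy))).2 (mul_lt_mul_of_pos_left hF hβ)
  · filter_upwards [eventually_gt_atTop 0] using h_ge
end

section
/- Let λ > 1 and α ≥ 0, and define D(y) = y(1+2αy)/(λ(1 - e^{-y(1+αy)})) + y(1+2αy) for y > 0. Then D is strictly increasing on (0, ∞), D(0⁺) = 1/λ < 1, and D(y_c) > 1, where y_c > 0 satisfies y_c(1+αy_c) = ln λ. Consequently there is a unique y_d ∈ (0, y_c) with D(y_d) = 1. -/
open Filter Set Real Topology

/-!
Write `u(y) = y (1 + α y)`, so that `u'(y) = 1 + 2 α y` and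
`D(y) = φ(u(y)) · (u'(y) / (1 + α y)) / λ + y u'(y)` with `φ(t) = t / (1 - e^{-t})`.
By convexity of `exp`, `φ` is strictly increasing on `(0, ∞)` with `φ(0⁺) = 1`; the other factors
are monotone and nonnegative, so `D` is strictly increasing with `D(0⁺) = 1 / λ`.
At `y_c` we have `e^{-u} = 1/λ`, hence `D(y_c) = λ y_c u'(y_c) / (λ - 1)`, which exceeds `1` since
`y_c u'(y_c) ≥ u(y_c) = log λ > 1 - 1/λ`. The intermediate value theorem and strict monotonicity
then give the unique crossing `y_d`.
-/

lemma one_sub_exp_neg_pos {t : ℝ} (ht : 0 < t) : 0 < 1 - exp (-t) := by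
  simpa using ht

lemma strictMonoOn_div_one_sub_exp_neg :
    StrictMonoOn (fun t : ℝ => t / (1 - exp (-t))) (Ioi 0) := by
  intro s (hs : 0 < s) t (ht : 0 < t) hst
  -- `(1 - exp (-t)) / t` is the slope of the secant of `exp` over `[-t, 0]`.
  have hslope : (1 - exp (-t)) / t < (1 - exp (-s)) / s := by
    have := strictConvexOn_exp.secant_strict_mono (mem_univ 0) (mem_univ (-t)) (mem_univ (-s))
      (by linarith) (by linarith) (by linarith)
    simpa only [exp_zero, sub_zero, div_neg, neg_div, ← neg_sub (exp _) 1, neg_neg] using this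
  have hpos : 0 < (1 - exp (-t)) / t := div_pos (one_sub_exp_neg_pos ht) ht
  simpa only [one_div_div] using one_div_lt_one_div_of_lt hpos hslope

lemma tendsto_div_one_sub_exp_neg_nhdsGT_zero :
    Tendsto (fun t : ℝ => t / (1 - exp (-t))) (𝓝[>] 0) (𝓝 1) := by
  have hderiv : HasDerivAt (fun t : ℝ => 1 - exp (-t)) 1 0 := by
    simpa using ((hasDerivAt_neg 0).exp).const_sub 1
  simpa [div_eq_inv_mul] using hderiv.tendsto_slope_zero_right.inv₀ one_ne_zero

lemma existsUnique_mem_Ioo_eq_of_tendsto_nhdsGT {α β : Type*}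
    [ConditionallyCompleteLinearOrder α] [DenselyOrdered α] [TopologicalSpace α] [OrderTopology α]
    [LinearOrder β] [TopologicalSpace β] [OrderClosedTopology β]
    {f : α → β} {a b : α} {l c : β} (hab : a < b) (hf : ContinuousOn f (Ioi a))
    (hmono : StrictMonoOn f (Ioi a)) (hl : Tendsto f (𝓝[>] a) (𝓝 l)) (hlc : l < c)
    (hcb : c < f b) : ∃! x, x ∈ Ioo a b ∧ f x = c := by
  have : NeBot (𝓝[>] a) := nhdsGT_neBot_of_exists_gt ⟨b, hab⟩
  obtain ⟨x, hxa, hx⟩ := isPreconnected_Ioi.intermediate_value_Ioc (mem_Ioi.2 hab)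
    (le_principal_iff.2 self_mem_nhdsWithin) hf hl ⟨hlc, hcb.le⟩
  have hxb : x < b := (hmono.lt_iff_lt hxa (mem_Ioi.2 hab)).1 (hx ▸ hcb)
  exact ⟨x, ⟨⟨hxa, hxb⟩, hx⟩, fun y ⟨hy, hyc⟩ => hmono.injOn hy.1 hxa (hyc.trans hx.symm)⟩

lemma strictMonoOn_mul_one_add_mul {a : ℝ} (ha : 0 ≤ a) :
    StrictMonoOn (fun y : ℝ => y * (1 + a * y)) (Ici 0) := by
  intro x (hx : 0 ≤ x) y (hy : 0 ≤ y) hxy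
  nlinarith [mul_nonneg (mul_nonneg ha (sub_nonneg.2 hxy.le)) (add_nonneg hx hy)]

lemma monotoneOn_one_add_two_mul_div_one_add_mul {a : ℝ} (ha : 0 ≤ a) :
    MonotoneOn (fun y : ℝ => (1 + 2 * a * y) / (1 + a * y)) (Ici 0) := by
  intro x (hx : 0 ≤ x) y (hy : 0 ≤ y) hxy
  rw [div_le_div_iff₀ (by positivity) (by positivity)]
  nlinarith [mul_le_mul_of_nonneg_left hxy ha]

noncomputable def detJ (lam α y : ℝ) : ℝ :=
  y * (1 + 2 * α * y) / (lam * (1 - exp (-(y * (1 + α * y))))) + y * (1 + 2 * α * y)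

section detJ

variable {lam α : ℝ}

lemma detJ_eq_of_pos (hα : 0 ≤ α) {y : ℝ} (hy : 0 < y) :
    detJ lam α y = y * (1 + α * y) / (1 - exp (-(y * (1 + α * y)))) *
      ((1 + 2 * α * y) / (1 + α * y)) / lam + y * (1 + 2 * α * y) := by
  have : 0 < 1 + α * y := by positivity
  rw [detJ]
  field_simp

lemma strictMonoOn_detJ (hlam : 0 < lam) (hα : 0 ≤ α) : StrictMonoOn (detJ lam α) (Ioi 0) := by
  intro a (ha : 0 < a) b (hb : 0 < b) hab
  have hua : 0 < a * (1 + α * a) := by positivity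
  have hub : 0 < b * (1 + α * b) := by positivity
  have hφ := strictMonoOn_div_one_sub_exp_neg hua hub
    (strictMonoOn_mul_one_add_mul hα ha.le hb.le hab)
  have hr := monotoneOn_one_add_two_mul_div_one_add_mul hα ha.le hb.le hab.le
  have hg := strictMonoOn_mul_one_add_mul (by positivity : 0 ≤ 2 * α) ha.le hb.le hab
  dsimp only at hφ hr hg
  have hprod := mul_le_mul hφ.le hr (by positivity) (div_pos hub (one_sub_exp_neg_pos hub)).le
  rw [detJ_eq_of_pos hα ha, detJ_eq_of_pos hα hb]
  linarith [div_le_div_of_nonneg_right hprod hlam.le]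

lemma tendsto_detJ_nhdsGT_zero (hα : 0 ≤ α) : Tendsto (detJ lam α) (𝓝[>] 0) (𝓝 (1 / lam)) := by
  have hu : Tendsto (fun y : ℝ => y * (1 + α * y)) (𝓝[>] 0) (𝓝[>] 0) := by
    have hcont : Continuous fun y : ℝ => y * (1 + α * y) := by fun_prop
    simpa using (hcont.continuousWithinAt (s := Ioi 0) (x := 0)).tendsto_nhdsWithin (t := Ioi 0)
      (fun y (hy : 0 < y) => show 0 < y * (1 + α * y) by positivity)
  have hr : Tendsto (fun y : ℝ => (1 + 2 * α * y) / (1 + α * y)) (𝓝[>] 0) (𝓝 1) := by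
    have : ContinuousAt (fun y : ℝ => (1 + 2 * α * y) / (1 + α * y)) 0 :=
      ContinuousAt.div (by fun_prop) (by fun_prop) (by simp)
    simpa using this.tendsto.mono_left nhdsWithin_le_nhds
  have hg : Tendsto (fun y : ℝ => y * (1 + 2 * α * y)) (𝓝[>] 0) (𝓝 0) := by
    have : Continuous fun y : ℝ => y * (1 + 2 * α * y) := by fun_prop
    simpa using (this.tendsto 0).mono_left nhdsWithin_le_nhds
  have := (((tendsto_div_one_sub_exp_neg_nhdsGT_zero.comp hu).mul hr).div_const lam).add hg
  rw [one_mul, add_zero] at this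
  exact this.congr' (eventually_nhdsWithin_of_forall fun y hy => (detJ_eq_of_pos hα hy).symm)

lemma continuousOn_detJ (hlam : lam ≠ 0) (hα : 0 ≤ α) : ContinuousOn (detJ lam α) (Ioi 0) := by
  refine ContinuousOn.add (ContinuousOn.div (by fun_prop) (by fun_prop) fun y (hy : 0 < y) => ?_)
    (by fun_prop)
  exact mul_ne_zero hlam (one_sub_exp_neg_pos (by positivity)).ne'

lemma one_lt_detJ_of_mul_eq_log (hlam : 1 < lam) (hα : 0 ≤ α) {y : ℝ}
    (hy : y * (1 + α * y) = log lam) : 1 < detJ lam α y := by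
  have hlam0 : 0 < lam := by linarith
  have hexp : exp (-(y * (1 + α * y))) = lam⁻¹ := by rw [hy, exp_neg, exp_log hlam0]
  have hlog : 1 - lam⁻¹ < log lam := by
    have := add_one_lt_exp (neg_ne_zero.2 (log_pos hlam).ne')
    rw [exp_neg, exp_log hlam0] at this
    linarith
  have hg : log lam ≤ y * (1 + 2 * α * y) := by
    rw [← hy]
    nlinarith [mul_nonneg hα (mul_self_nonneg y)]
  have hden : lam * (1 - lam⁻¹) = lam - 1 := by field_simp
  rw [detJ, hexp, hden, div_add' _ _ _ (by linarith), one_lt_div (by linarith)]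
  nlinarith [mul_lt_mul_of_pos_right (hlog.trans_le hg) hlam0, mul_inv_cancel₀ hlam0.ne']

end detJ

theorem detJ_monotone (lam α yc : ℝ) (hlam : 1 < lam) (hα : 0 ≤ α)
    (hyc : 0 < yc) (hyceq : yc * (1 + α * yc) = Real.log lam) :
    let D : ℝ → ℝ := fun y =>
      y * (1 + 2 * α * y) / (lam * (1 - Real.exp (-(y * (1 + α * y))))) +
        y * (1 + 2 * α * y)
    StrictMonoOn D (Set.Ioi 0) ∧
      Filter.Tendsto D (nhdsWithin 0 (Set.Ioi 0)) (nhds (1 / lam)) ∧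
      1 / lam < 1 ∧ 1 < D yc ∧
      ∃! yd : ℝ, yd ∈ Set.Ioo 0 yc ∧ D yd = 1 := by
  intro D
  have hlam0 : 0 < lam := by linarith
  have hmono : StrictMonoOn D (Ioi 0) := strictMonoOn_detJ hlam0 hα
  have hlim : Tendsto D (𝓝[>] 0) (𝓝 (1 / lam)) := tendsto_detJ_nhdsGT_zero hα
  have hlt : 1 / lam < 1 := (div_lt_one hlam0).2 hlam
  have hyc1 : 1 < D yc := one_lt_detJ_of_mul_eq_log hlam hα hyceq
  exact ⟨hmono, hlim, hlt, hyc1, existsUnique_mem_Ioo_eq_of_tendsto_nhdsGT hyc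
    (continuousOn_detJ hlam0.ne' hα) hmono hlim hlt hyc1⟩
end

section
/- Let λ > 1 and α ≥ 0. If 2α ≤ 1 and β(λ-1) ≤ 1, then the system of equations λ e^{-y(1+αy)} - 1 = y/(β(1 - e^{-y(1+αy)})) has no solution with y > 0, i.e., the predator-prey system has no interior steady state. -/
/-!
Write `E = exp (-y (1 + α y))`. At a positive solution, `y = (λ E - 1) β (1 - E)`, and
`β (λ - 1) ≤ 1` bounds this by `E (1 - E)`. On the other hand `1 - E ≤ y (1 + α y)` and
`(1 + α y) E < 1` (as `α y ≤ y (1 + α y)` for `α ≤ 1`), so `E (1 - E) < y`.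
-/

open Real

theorem one_add_mul_exp_neg_lt_one {t g : ℝ} (htg : t ≤ g) (hg : g ≠ 0) :
    (1 + t) * exp (-g) < 1 := by
  calc (1 + t) * exp (-g) < exp g * exp (-g) := by
        gcongr
        linarith [add_one_lt_exp hg]
    _ = 1 := by rw [← exp_add, add_neg_cancel, exp_zero]

theorem exp_neg_mul_one_sub_exp_neg_lt {α y : ℝ} (hα : 0 ≤ α) (hα1 : α ≤ 1) (hy : 0 < y) :
    exp (-(y * (1 + α * y))) * (1 - exp (-(y * (1 + α * y)))) < y := by
  set g := y * (1 + α * y)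
  have hαy : α * y ≤ g := by nlinarith [mul_nonneg hα (mul_nonneg hy.le hy.le)]
  calc exp (-g) * (1 - exp (-g)) ≤ exp (-g) * g := by
        gcongr
        linarith [one_sub_le_exp_neg g]
    _ = y * ((1 + α * y) * exp (-g)) := by ring
    _ < y * 1 := by gcongr; exact one_add_mul_exp_neg_lt_one hαy (by positivity)
    _ = y := mul_one y

theorem mul_mul_one_sub_le_mul_one_sub {lam β E : ℝ} (hβ : 0 ≤ β) (hR : β * (lam - 1) ≤ 1)
    (hE0 : 0 ≤ E) (hE1 : E ≤ 1) :
    (lam * E - 1) * (β * (1 - E)) ≤ E * (1 - E) := by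
  have hcoef : β * (lam * E - 1) ≤ E := by nlinarith [mul_le_mul_of_nonneg_right hR hE0]
  nlinarith [mul_le_mul_of_nonneg_right hcoef (sub_nonneg.2 hE1)]

theorem no_interior_steady_state_general (lam α β : ℝ) (hα : 0 ≤ α)
    (hα2 : 2 * α ≤ 1) (hβ : 0 < β) (hR : β * (lam - 1) ≤ 1) :
    ¬ ∃ y : ℝ, 0 < y ∧
      lam * Real.exp (-(y * (1 + α * y))) - 1 =
        y / (β * (1 - Real.exp (-(y * (1 + α * y))))) := by
  rintro ⟨y, hy, heq⟩
  set E := exp (-(y * (1 + α * y)))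
  have hg : 0 < y * (1 + α * y) := by positivity
  have hE1 : E < 1 := exp_lt_one_iff.2 (neg_neg_of_pos hg)
  have hy_eq : y = (lam * E - 1) * (β * (1 - E)) :=
    ((eq_div_iff (mul_pos hβ (sub_pos.2 hE1)).ne').1 heq).symm
  have hupper := mul_mul_one_sub_le_mul_one_sub hβ.le hR (exp_pos _).le hE1.le
  linarith [exp_neg_mul_one_sub_exp_neg_lt hα (by linarith) hy]

theorem no_interior_steady_state (lam α β : ℝ) (hlam : 1 < lam) (hα : 0 ≤ α)
    (hα2 : 2 * α ≤ 1) (hβ : 0 < β) (hR : β * (lam - 1) ≤ 1) :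
    ¬ ∃ y : ℝ, 0 < y ∧
      lam * Real.exp (-(y * (1 + α * y))) - 1 =
        y / (β * (1 - Real.exp (-(y * (1 + α * y))))) :=
  no_interior_steady_state_general lam α β hα hα2 hβ hR
end

section
/- Let λ > 1, α ≥ 0, β > 0. If β(λ-1) > 1, then the equation λ e^{-y(1+αy)} - 1 = y/(β(1 - e^{-y(1+αy)})) has exactly one solution y ∈ (0, y_c), where y_c(1+αy_c) = ln λ. Hence the predator-prey system has a unique interior steady state. -/
/-!
Put `F y = β (λ e^{-t} - 1)(1 - e^{-t}) - y` with `t = y(1 + αy)`; on `(0, y_c)` the steady states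
are the zeros of `F`. Since `F 0 = 0`, `F' 0 = β(λ - 1) - 1 > 0` and `F y_c = -y_c < 0`, the
intermediate value theorem gives a zero. At every zero the bound `2t < e^t - e^{-t}` together with
`β(λ - 1) > 1` forces `F' < 0`, and a continuous function crossing zero downwards at each of its
zeros in an interval has at most one zero there.
-/

open Real Filter Set Topology

section

variable {f : ℝ → ℝ} {f' x : ℝ}

lemma HasDerivAt.eventually_nhdsGT_lt (hf : HasDerivAt f f' x) (hf' : f' < 0) :
    ∀ᶠ y in 𝓝[>] x, f y < f x := by
  filter_upwards [((hasDerivAt_iff_tendsto_slope.mp hf).mono_left (nhdsGT_le_nhdsNE x)).eventually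
    (eventually_lt_nhds hf'), self_mem_nhdsWithin] with y hy hxy
  exact (slope_neg_iff_of_le hxy.le).mp hy

lemma HasDerivAt.eventually_nhdsLT_gt (hf : HasDerivAt f f' x) (hf' : f' < 0) :
    ∀ᶠ y in 𝓝[<] x, f x < f y := by
  filter_upwards [((hasDerivAt_iff_tendsto_slope.mp hf).mono_left (nhdsLT_le_nhdsNE x)).eventually
    (eventually_lt_nhds hf'), self_mem_nhdsWithin] with y hy hyx
  rw [slope_comm] at hy
  exact (slope_neg_iff_of_le hyx.le).mp hy

lemma HasDerivAt.eventually_nhdsGT_gt (hf : HasDerivAt f f' x) (hf' : 0 < f') :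
    ∀ᶠ y in 𝓝[>] x, f x < f y := by
  simpa using hf.neg.eventually_nhdsGT_lt (neg_neg_of_pos hf')

end

lemma exists_mem_Ioo_eq_zero_of_hasDerivAt_pos {f : ℝ → ℝ} {f' a b : ℝ} (hab : a < b)
    (hf : ContinuousOn f (Icc a b)) (ha : f a = 0) (hfa : HasDerivAt f f' a) (hf' : 0 < f')
    (hb : f b < 0) : ∃ c ∈ Ioo a b, f c = 0 := by
  obtain ⟨d, hfd, hd⟩ := ((hfa.eventually_nhdsGT_gt hf').and (Ioo_mem_nhdsGT hab)).exists
  obtain ⟨c, hc, hfc⟩ := intermediate_value_Ioo' hd.2.le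
    (hf.mono (Icc_subset_Icc_left hd.1.le)) ⟨hb, ha ▸ hfd⟩
  exact ⟨c, ⟨hd.1.trans hc.1, hc.2⟩, hfc⟩

lemma Set.OrdConnected.subsingleton_zeros_of_hasDerivAt_neg {f : ℝ → ℝ} {s : Set ℝ}
    (hs : s.OrdConnected) (hf : ContinuousOn f s)
    (hf' : ∀ x ∈ s, f x = 0 → ∃ f', HasDerivAt f f' x ∧ f' < 0) :
    (s ∩ f ⁻¹' {0}).Subsingleton := by
  rintro a ⟨has, ha⟩ b ⟨hbs, hb⟩
  wlog hab : a < b generalizing a b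
  · rcases (not_lt.mp hab).lt_or_eq with h | h
    · exact (this hbs hb has ha h).symm
    · exact h.symm
  exfalso
  obtain ⟨fb, hfb, hfb'⟩ := hf' b hbs hb
  obtain ⟨c, hfc, hc⟩ := ((hfb.eventually_nhdsLT_gt hfb').and (Ioo_mem_nhdsLT hab)).exists
  rw [hb] at hfc
  have hfac : ContinuousOn f (Icc a c) :=
    hf.mono ((Icc_subset_Icc_right hc.2.le).trans (hs.out has hbs))
  -- the last point `m` of `[a, c]` with `f m ≤ 0` is a zero with `0 < f` just to its right
  obtain ⟨m, ⟨hm, hfm⟩, hmax⟩ := (isCompact_Icc.of_isClosed_subset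
    (hfac.preimage_isClosed_of_isClosed isClosed_Icc isClosed_Iic) inter_subset_left).exists_isGreatest
    ⟨a, left_mem_Icc.2 hc.1.le, ha.le⟩
  obtain ⟨z, hz, hfz⟩ := intermediate_value_Icc hm.2 (hfac.mono (Icc_subset_Icc_left hm.1))
    ⟨hfm, hfc.le⟩
  have hzm : z = m := le_antisymm (hmax ⟨⟨hm.1.trans hz.1, hz.2⟩, hfz.le⟩) hz.1
  subst hzm
  have hzc : z < c := hz.2.lt_of_ne (by rintro rfl; exact hfc.ne' hfz)
  obtain ⟨fz, hfz', hfz''⟩ := hf' z (hs.out has hbs ⟨hm.1, hzc.le.trans hc.2.le⟩) hfz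
  obtain ⟨y, hfy, hy⟩ := ((hfz'.eventually_nhdsGT_lt hfz'').and (Ioo_mem_nhdsGT hzc)).exists
  exact (hmax ⟨⟨hm.1.trans hy.1.le, hy.2.le⟩, (hfy.trans_eq hfz).le⟩).not_gt hy.1

lemma two_mul_mul_exp_neg_lt {t : ℝ} (ht : 0 < t) : 2 * t * exp (-t) < 1 - exp (-t) ^ 2 := by
  have hsinh : t < (exp t - exp (-t)) / 2 := sinh_eq t ▸ self_lt_sinh_iff.2 ht
  have hinv : exp t * exp (-t) = 1 := by rw [← exp_add, add_neg_cancel, exp_zero]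
  nlinarith [exp_pos (-t)]

/-- With `v = e^{-t}`, `t = y(1 + αy)` and `β(λv - 1)(1 - v) = y`, this is `y F'(y) < 0`. -/
lemma transversality_inequality {lam β v t y : ℝ} (hβ : 0 < β) (hR : 1 < β * (lam - 1))
    (hv0 : 0 < v) (hv1 : v < 1) (hlv : 1 < lam * v) (hyt : y ≤ 2 * t)
    (hsinh : 2 * t * v < 1 - v ^ 2) (hy : β * (lam * v - 1) * (1 - v) = y) :
    β * v * (2 * lam * v - lam - 1) * (2 * t - y) < y := by
  have hlam : 0 < lam - 1 := pos_of_mul_pos_right (zero_lt_one.trans hR) hβ.le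
  have hA : 0 < (lam * v - 1) * (1 - v) := mul_pos (by linarith) (by linarith)
  have hy0 : 0 < y := hy ▸ by positivity
  rcases le_or_gt (2 * lam * v - lam - 1) 0 with hc | hc
  · have : β * v * (2 * lam * v - lam - 1) * (2 * t - y) ≤ 0 :=
      mul_nonpos_of_nonpos_of_nonneg (mul_nonpos_of_nonneg_of_nonpos (by positivity) hc)
        (by linarith)
    linarith
  · have h1 : β * (2 * lam * v - lam - 1) * (2 * t * v) <
        β * (2 * lam * v - lam - 1) * (1 - v ^ 2) :=
      mul_lt_mul_of_pos_left hsinh (by positivity)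
    have h2 : (lam - 1) * ((2 * lam * v - lam - 1) * (1 - v ^ 2)) ≤
        (lam - 1) * ((lam * v - 1) * (1 - v)) +
          (lam * v - 1) * (1 - v) * (v * (2 * lam * v - lam - 1)) := by
      have : 0 ≤ lam * (1 - v) ^ 3 * (lam * (1 + 2 * v) - 1) :=
        mul_nonneg (mul_nonneg (by linarith) (pow_nonneg (by linarith) 3)) (by nlinarith)
      linear_combination this
    have h3 : β * (2 * lam * v - lam - 1) * (1 - v ^ 2) <
        y + β * v * (2 * lam * v - lam - 1) * y := by
      have : 0 < y * v * (2 * lam * v - lam - 1) := by positivity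
      refine lt_of_mul_lt_mul_left ?_ hlam.le
      subst hy
      nlinarith [mul_le_mul_of_nonneg_left h2 hβ.le, mul_lt_mul_of_pos_left hR this]
    linear_combination h1 + h3

/-- `β (1 - e^{-y(1+αy)}) (f y - h y)`, whose zeros on `(0, y_c)` are the steady states. -/
noncomputable def steadyStateResidual (lam α β y : ℝ) : ℝ :=
  β * (lam * exp (-(y * (1 + α * y))) - 1) * (1 - exp (-(y * (1 + α * y)))) - y

section SteadyStateResidual

variable {lam α β y : ℝ}

lemma steadyStateResidual_eq_zero_iff (hβ : β ≠ 0) (hy : y * (1 + α * y) ≠ 0) :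
    steadyStateResidual lam α β y = 0 ↔
      lam * exp (-(y * (1 + α * y))) - 1 = y / (β * (1 - exp (-(y * (1 + α * y))))) := by
  have hexp : 1 - exp (-(y * (1 + α * y))) ≠ 0 := by
    rw [sub_ne_zero, ne_comm, Ne, exp_eq_one_iff, neg_eq_zero]
    exact hy
  rw [eq_div_iff (mul_ne_zero hβ hexp), steadyStateResidual]
  constructor <;> intro h <;> linear_combination h

lemma steadyStateResidual_zero : steadyStateResidual lam α β 0 = 0 := by
  simp [steadyStateResidual]

lemma steadyStateResidual_of_eq_log (hlam : 0 < lam) (h : y * (1 + α * y) = log lam) :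
    steadyStateResidual lam α β y = -y := by
  rw [steadyStateResidual, h, exp_neg, exp_log hlam, mul_inv_cancel₀ hlam.ne']
  ring

lemma hasDerivAt_steadyStateResidual (lam α β y : ℝ) :
    HasDerivAt (steadyStateResidual lam α β)
      (β * (1 + 2 * α * y) * exp (-(y * (1 + α * y))) *
        (2 * lam * exp (-(y * (1 + α * y))) - lam - 1) - 1) y := by
  have ht : HasDerivAt (fun y => -(y * (1 + α * y))) (-(1 + 2 * α * y)) y :=
    ((hasDerivAt_id' y).mul (((hasDerivAt_id' y).const_mul α).const_add 1)).neg.congr_deriv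
      (by ring)
  have hv := ht.exp
  exact ((((hv.const_mul lam).sub_const 1).const_mul β).mul (hv.const_sub 1)).sub
    (hasDerivAt_id' y) |>.congr_deriv (by ring)

lemma steadyStateResidual_deriv_neg (hα : 0 ≤ α) (hβ : 0 < β) (hR : 1 < β * (lam - 1))
    (hlam : 0 < lam) (hy : 0 < y) (hlog : y * (1 + α * y) < log lam)
    (hzero : steadyStateResidual lam α β y = 0) :
    β * (1 + 2 * α * y) * exp (-(y * (1 + α * y))) *
      (2 * lam * exp (-(y * (1 + α * y))) - lam - 1) - 1 < 0 := by
  rw [steadyStateResidual, sub_eq_zero] at hzero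
  set t := y * (1 + α * y) with ht
  have ht0 : 0 < t := by positivity
  have hlv : 1 < lam * exp (-t) := by
    rw [exp_neg, ← div_eq_mul_inv, one_lt_div (exp_pos t)]
    exact (lt_log_iff_exp_lt hlam).1 hlog
  have hyt : y ≤ 2 * t := by nlinarith [mul_nonneg hα (mul_self_nonneg y)]
  have key := transversality_inequality hβ hR (exp_pos _) (exp_lt_one_iff.2 (neg_lt_zero.2 ht0))
    hlv hyt (two_mul_mul_exp_neg_lt ht0) hzero
  have : (β * (1 + 2 * α * y) * exp (-t) * (2 * lam * exp (-t) - lam - 1) - 1) * y < 0 := by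
    linear_combination key
  exact neg_of_mul_neg_left this hy.le

end SteadyStateResidual

theorem unique_interior_steady_state (lam α β yc : ℝ) (hlam : 1 < lam) (hα : 0 ≤ α)
    (hβ : 0 < β) (hR : 1 < β * (lam - 1))
    (hyc : 0 < yc) (hyceq : yc * (1 + α * yc) = Real.log lam) :
    ∃! y : ℝ, y ∈ Set.Ioo 0 yc ∧
      lam * Real.exp (-(y * (1 + α * y))) - 1 =
        y / (β * (1 - Real.exp (-(y * (1 + α * y))))) := by
  set F := steadyStateResidual lam α β
  have hlam0 : 0 < lam := zero_lt_one.trans hlam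
  have hF : Continuous F := continuous_iff_continuousAt.2 fun y =>
    (hasDerivAt_steadyStateResidual lam α β y).continuousAt
  have hlog : ∀ y ∈ Ioo 0 yc, 0 < y * (1 + α * y) ∧ y * (1 + α * y) < log lam := by
    rintro y ⟨hy, hyyc⟩
    refine ⟨by positivity, hyceq ▸ ?_⟩
    nlinarith [mul_le_mul_of_nonneg_left (add_le_add hyyc.le hyyc.le) hα]
  have hsolves : ∀ y ∈ Ioo 0 yc, F y = 0 ↔ lam * exp (-(y * (1 + α * y))) - 1 =
      y / (β * (1 - exp (-(y * (1 + α * y))))) := fun y hy =>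
    steadyStateResidual_eq_zero_iff hβ.ne' (hlog y hy).1.ne'
  obtain ⟨z, hz, hFz⟩ : ∃ z ∈ Ioo 0 yc, F z = 0 := by
    refine exists_mem_Ioo_eq_zero_of_hasDerivAt_pos hyc hF.continuousOn steadyStateResidual_zero
      (hasDerivAt_steadyStateResidual lam α β 0) ?_ ?_
    · simpa [two_mul] using sub_pos.2 hR
    · exact (steadyStateResidual_of_eq_log hlam0 hyceq).trans_lt (neg_lt_zero.2 hyc)
  have hunique : (Ioo 0 yc ∩ F ⁻¹' {0}).Subsingleton :=
    ordConnected_Ioo.subsingleton_zeros_of_hasDerivAt_neg hF.continuousOn fun y hy hFy =>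
      ⟨_, hasDerivAt_steadyStateResidual lam α β y,
        steadyStateResidual_deriv_neg hα hβ hR hlam0 hy.1 (hlog y hy).2 hFy⟩
  exact ⟨z, ⟨hz, (hsolves z hz).1 hFz⟩, fun y ⟨hy, hsol⟩ =>
    hunique ⟨hy, (hsolves y hy).2 hsol⟩ ⟨hz, hFz⟩⟩
end

section
/- Let λ > 1 and α with 2α > 1. Define v(y) = (λ+1)e^{y(1+αy)}[(1+2αy)² + 2α] - 16λα. Then v(0) < 0, v is strictly increasing on [0,∞), and v(y) → ∞ as y → ∞; hence there exists a unique y₂ > 0 with v < 0 on [0, y₂) and v > 0 on (y₂, ∞). -/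
/-!
Both factors `exp (y * (1 + α y))` and `(1 + 2 α y)² + 2 α` of `v` are positive and increasing
on `[0, ∞)`, the first strictly, and both tend to `∞`; so `v` increases strictly from
`v 0 = (λ + 1)(1 + 2α) - 16λα < 0` to `∞`. Its unique zero `y₂` on `[0, ∞)`, given by the
intermediate value theorem, is the unique sign change.
-/

open Set Filter

noncomputable def vFun (lam α y : ℝ) : ℝ :=
  (lam + 1) * Real.exp (y * (1 + α * y)) * ((1 + 2 * α * y) ^ 2 + 2 * α) - 16 * lam * α

theorem exists_unique_sign_change_of_strictMonoOn {f : ℝ → ℝ} {a : ℝ}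
    (hcont : ContinuousOn f (Ici a)) (hmono : StrictMonoOn f (Ici a)) (ha : f a < 0)
    (htop : Tendsto f atTop atTop) :
    ∃! c : ℝ, a < c ∧ (∀ y ∈ Ico a c, f y < 0) ∧ ∀ y ∈ Ioi c, 0 < f y := by
  obtain ⟨b, hfb, hab⟩ := ((htop.eventually_gt_atTop 0).and (eventually_ge_atTop a)).exists
  obtain ⟨c, ⟨hac, -⟩, hfc⟩ :=
    intermediate_value_Ioo hab (hcont.mono Icc_subset_Ici_self) ⟨ha, hfb⟩
  have hc : a ≤ c := hac.le
  refine ⟨c, ⟨hac, fun y hy => hfc ▸ hmono hy.1 hc hy.2,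
    fun y (hy : c < y) => hfc ▸ hmono hc (hc.trans hy.le) hy⟩, ?_⟩
  rintro d ⟨-, hneg, hpos⟩
  by_contra hdc
  rcases lt_or_gt_of_ne hdc with hlt | hgt
  · exact (hpos c hlt).ne' hfc
  · exact (hneg c ⟨hc, hgt⟩).ne hfc

section

variable {lam α : ℝ}

theorem vFun_zero_neg (hlam : 1 < lam) (hα : 1 < 2 * α) : vFun lam α 0 < 0 := by
  have hv0 : vFun lam α 0 = (lam + 1) * (1 + 2 * α) - 16 * lam * α := by simp [vFun]
  rw [hv0]
  -- `(λ + 1)(1 + 2α) = 4λα + 2 - (λ - 1)(2α - 1)` and `λα > 1/2`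
  nlinarith [mul_pos (sub_pos.2 hlam) (sub_pos.2 hα)]

theorem strictMonoOn_vFun (hlam : 0 < lam + 1) (hα : 0 ≤ α) :
    StrictMonoOn (vFun lam α) (Ici 0) := by
  have hexp : StrictMonoOn (fun y => Real.exp (y * (1 + α * y))) (Ici 0) :=
    Real.exp_strictMono.comp_strictMonoOn fun a (ha : 0 ≤ a) b _ hab => by
      nlinarith [mul_nonneg hα (add_nonneg ha (ha.trans hab.le))]
  have hsq : MonotoneOn (fun y => (1 + 2 * α * y) ^ 2 + 2 * α) (Ici 0) :=
    fun a (ha : 0 ≤ a) b _ hab => by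
      have : 0 ≤ 1 + 2 * α * a := by positivity
      dsimp only
      gcongr
  intro a (ha : 0 ≤ a) b hb hab
  have hsq_pos : 0 < (1 + 2 * α * a) ^ 2 + 2 * α := by
    have : 0 < 1 + 2 * α * a := by positivity
    positivity
  have hprod := mul_lt_mul (hexp ha hb hab) (hsq ha hb hab.le) hsq_pos (Real.exp_pos _).le
  unfold vFun
  rw [mul_assoc (lam + 1), mul_assoc (lam + 1)]
  exact sub_lt_sub_right (mul_lt_mul_of_pos_left hprod hlam) _

theorem tendsto_vFun_atTop (hlam : 0 < lam + 1) (hα : 0 < α) :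
    Tendsto (vFun lam α) atTop atTop := by
  have hlin : ∀ c, 0 < c → Tendsto (fun y : ℝ => 1 + c * y) atTop atTop := fun c hc =>
    tendsto_atTop_add_const_left _ 1 (tendsto_id.const_mul_atTop hc)
  have hexp : Tendsto (fun y => Real.exp (y * (1 + α * y))) atTop atTop :=
    Real.tendsto_exp_atTop.comp (tendsto_id.atTop_mul_atTop₀ (hlin α hα))
  have hsq : Tendsto (fun y => (1 + 2 * α * y) ^ 2 + 2 * α) atTop atTop :=
    tendsto_atTop_add_const_right _ _
      ((tendsto_pow_atTop two_ne_zero).comp (hlin (2 * α) (by positivity)))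
  unfold vFun
  simpa only [sub_eq_add_neg] using
    tendsto_atTop_add_const_right _ _ ((hexp.const_mul_atTop hlam).atTop_mul_atTop₀ hsq)

end

theorem v_properties (lam α : ℝ) (hlam : 1 < lam) (hα : 1 < 2 * α) :
    let v : ℝ → ℝ := fun y =>
      (lam + 1) * Real.exp (y * (1 + α * y)) * ((1 + 2 * α * y) ^ 2 + 2 * α) -
        16 * lam * α
    v 0 < 0 ∧ StrictMonoOn v (Set.Ici 0) ∧
      Filter.Tendsto v Filter.atTop Filter.atTop ∧
      ∃! y₂ : ℝ, 0 < y₂ ∧ (∀ y ∈ Set.Ico 0 y₂, v y < 0) ∧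
        (∀ y ∈ Set.Ioi y₂, 0 < v y) := by
  have hlam' : 0 < lam + 1 := by linarith
  have hα' : 0 < α := by linarith
  have hcont : Continuous (vFun lam α) := by unfold vFun; fun_prop
  have hmono := strictMonoOn_vFun hlam' hα'.le
  have hv0 := vFun_zero_neg hlam hα
  have htop := tendsto_vFun_atTop hlam' hα'
  exact ⟨hv0, hmono, htop,
    exists_unique_sign_change_of_strictMonoOn hcont.continuousOn hmono hv0 htop⟩
end

section
/- Let λ > 1, α > 0 with 2α > (3λ-1)/(λ-1), and suppose 0 < β(λ-1) < 1. Then the equation w(y) = y, with w(y) = β(λe^{-y(1+αy)} - 1)(1 - e^{-y(1+αy)}), has at most two solutions in (0, y_c), where y_c(1+αy_c) = ln λ. -/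
/-!
Substitute `t = exp (-(y * (1 + α * y)))`, a bijection from `y ≥ 0` onto `t ∈ (0, 1]` with inverse
`y = (√(1 - 4 α log t) - 1) / (2 α)`. The positive fixed points of `w`, together with the trivial
one `y = 0`, become zeros in `(0, 1]` of `Φ t = β (λ t - 1) (1 - t) - y(t)`. The first term is
quadratic, and `-y'(t) = (t √(1 - 4 α log t))⁻¹` is strictly convex, so `Φ'` is strictly convex and
has at most two zeros. By Rolle, `Φ` has at most three zeros, and `t = 1` is one of them.
-/

open Real Set

theorem StrictConvexOn.false_of_three_zeros {s : Set ℝ} {f : ℝ → ℝ} (hf : StrictConvexOn ℝ s f)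
    {a b c : ℝ} (ha : a ∈ s) (hc : c ∈ s) (hab : a < b) (hbc : b < c)
    (hfa : f a = 0) (hfb : f b = 0) (hfc : f c = 0) : False := by
  simpa [hfa, hfb, hfc] using hf.slope_strict_mono_adjacent ha hc hab hbc

theorem false_of_four_zeros_of_strictConvexOn_deriv {f f' : ℝ → ℝ} {a b c d : ℝ}
    (hab : a < b) (hbc : b < c) (hcd : c < d) (hcont : ContinuousOn f (Icc a d))
    (hderiv : ∀ x ∈ Ioo a d, HasDerivAt f (f' x) x) (hconv : StrictConvexOn ℝ (Ioo a d) f')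
    (hfa : f a = 0) (hfb : f b = 0) (hfc : f c = 0) (hfd : f d = 0) : False := by
  have rolle : ∀ x ∈ Icc a d, ∀ y ∈ Icc a d, x < y → f x = f y → ∃ z ∈ Ioo x y, f' z = 0 :=
    fun x hx y hy hxy hfxy => exists_hasDerivAt_eq_zero hxy
      (hcont.mono (Icc_subset_Icc hx.1 hy.2)) hfxy
      fun z hz => hderiv z ⟨hx.1.trans_lt hz.1, hz.2.trans_le hy.2⟩
  obtain ⟨x, hx, hx0⟩ :=
    rolle a ⟨le_rfl, by linarith⟩ b ⟨hab.le, by linarith⟩ hab (hfa.trans hfb.symm)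
  obtain ⟨y, hy, hy0⟩ :=
    rolle b ⟨hab.le, by linarith⟩ c ⟨by linarith, hcd.le⟩ hbc (hfb.trans hfc.symm)
  obtain ⟨z, hz, hz0⟩ :=
    rolle c ⟨by linarith, hcd.le⟩ d ⟨by linarith, le_rfl⟩ hcd (hfc.trans hfd.symm)
  exact hconv.false_of_three_zeros ⟨hx.1, by linarith [hx.2]⟩ ⟨by linarith [hz.1], hz.2⟩
    (hx.2.trans hy.1) (hy.2.trans hz.1) hx0 hy0 hz0

theorem strictConvexOn_of_hasDerivAt2_pos {D : Set ℝ} (hD : Convex ℝ D) (hDo : IsOpen D)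
    {f f' f'' : ℝ → ℝ} (hf : ∀ x ∈ D, HasDerivAt f (f' x) x)
    (hf' : ∀ x ∈ D, HasDerivAt f' (f'' x) x) (hf''_pos : ∀ x ∈ D, 0 < f'' x) :
    StrictConvexOn ℝ D f := by
  have hmono : StrictMonoOn f' D :=
    strictMonoOn_of_deriv_pos hD (fun x hx => (hf' x hx).continuousAt.continuousWithinAt)
      fun x hx => (hf' x (interior_subset hx)).deriv ▸ hf''_pos x (interior_subset hx)
  refine StrictMonoOn.strictConvexOn_of_deriv hD
    (fun x hx => (hf x hx).continuousAt.continuousWithinAt) ?_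
  rw [hDo.interior_eq]
  exact hmono.congr fun x hx => ((hf x hx).deriv).symm

theorem eq_or_eq_or_eq_of_not_lt_lt {α : Type*} [LinearOrder α] {P : α → Prop}
    (h : ∀ x y z, x < y → y < z → P x → P y → P z → False) {a b c : α}
    (ha : P a) (hb : P b) (hc : P c) : a = b ∨ a = c ∨ b = c := by
  rcases lt_trichotomy a b with h₁ | h₁ | h₁ <;> rcases lt_trichotomy b c with h₂ | h₂ | h₂ <;>
    rcases lt_trichotomy a c with h₃ | h₃ | h₃ <;>
    first
    | tauto
    | exact (h _ _ _ h₁ h₂ ha hb hc).elim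
    | exact (h _ _ _ h₃ h₂ ha hc hb).elim
    | exact (h _ _ _ h₁ h₃ hb ha hc).elim
    | exact (h _ _ _ h₂ h₃ hb hc ha).elim
    | exact (h _ _ _ h₃ h₁ hc ha hb).elim
    | exact (h _ _ _ h₂ h₁ hc hb ha).elim

namespace WFixedPoint

noncomputable def w (lam α β y : ℝ) : ℝ :=
  β * (lam * exp (-(y * (1 + α * y))) - 1) * (1 - exp (-(y * (1 + α * y))))

noncomputable def radicand (α t : ℝ) : ℝ := 1 - 4 * α * log t

/-- The inverse of `y ↦ exp (-(y * (1 + α * y)))` on `y ≥ 0`. -/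
noncomputable def invQuadExp (α t : ℝ) : ℝ := (√(radicand α t) - 1) / (2 * α)

/-- `w y = y` iff `fixedPointDefect (exp (-(y * (1 + α * y)))) = 0`, for `y ≥ 0`. -/
noncomputable def fixedPointDefect (lam α β t : ℝ) : ℝ :=
  β * (lam * t - 1) * (1 - t) - invQuadExp α t

variable {lam α β t : ℝ}

theorem one_le_radicand (hα : 0 ≤ α) (ht : 0 < t) (ht1 : t ≤ 1) : 1 ≤ radicand α t := by
  have := log_nonpos ht.le ht1
  unfold radicand
  nlinarith

theorem hasDerivAt_radicand (ht : t ≠ 0) : HasDerivAt (radicand α) (-(4 * α) / t) t := by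
  refine (((hasDerivAt_log ht).const_mul (4 * α)).const_sub 1).congr_deriv ?_
  ring

theorem hasDerivAt_sqrt_radicand (ht : t ≠ 0) (hV : 0 < radicand α t) :
    HasDerivAt (fun s => √(radicand α s)) (-(2 * α) / (t * √(radicand α t))) t := by
  refine ((hasDerivAt_sqrt hV.ne').comp t (hasDerivAt_radicand ht)).congr_deriv ?_
  have := (sqrt_pos.2 hV).ne'
  field_simp
  ring

theorem hasDerivAt_inv_mul_sqrt_radicand (ht : 0 < t) (hV : 0 < radicand α t) :
    HasDerivAt (fun s => (s * √(radicand α s))⁻¹)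
      ((2 * α - radicand α t) / (t ^ 2 * radicand α t * √(radicand α t))) t := by
  have hr := sqrt_pos.2 hV
  have hprod : HasDerivAt (fun s => s * √(radicand α s))
      (1 * √(radicand α t) + t * (-(2 * α) / (t * √(radicand α t)))) t :=
    (hasDerivAt_id' t).mul (hasDerivAt_sqrt_radicand ht.ne' hV)
  refine (hprod.inv (by positivity)).congr_deriv ?_
  have hV2 : radicand α t = √(radicand α t) ^ 2 := (sq_sqrt hV.le).symm
  generalize √(radicand α t) = r at hr hV2 ⊢
  rw [hV2]
  field_simp
  ring

theorem hasDerivAt_deriv_inv_mul_sqrt_radicand (ht : 0 < t) (hV : 0 < radicand α t) :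
    HasDerivAt (fun s => (2 * α - radicand α s) / (s ^ 2 * radicand α s * √(radicand α s)))
      (2 * (radicand α t ^ 2 - 3 * α * radicand α t + 6 * α ^ 2) /
        (t ^ 3 * radicand α t ^ 2 * √(radicand α t))) t := by
  have hr := sqrt_pos.2 hV
  have hden : HasDerivAt (fun s => s ^ 2 * radicand α s * √(radicand α s))
      ((2 * t * radicand α t + t ^ 2 * (-(4 * α) / t)) * √(radicand α t) +
        t ^ 2 * radicand α t * (-(2 * α) / (t * √(radicand α t)))) t := by
    refine (((hasDerivAt_pow 2 t).mul (hasDerivAt_radicand ht.ne')).mul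
      (hasDerivAt_sqrt_radicand ht.ne' hV)).congr_deriv ?_
    norm_num
  refine (((hasDerivAt_radicand ht.ne').const_sub (2 * α)).div hden
    (by positivity)).congr_deriv ?_
  have hV2 : radicand α t = √(radicand α t) ^ 2 := (sq_sqrt hV.le).symm
  generalize √(radicand α t) = r at hr hV2 ⊢
  rw [hV2]
  field_simp
  ring

theorem strictConvexOn_inv_mul_sqrt_radicand (hα : 0 < α) :
    StrictConvexOn ℝ (Ioo 0 1) (fun t => (t * √(radicand α t))⁻¹) := by
  have hV : ∀ t ∈ Ioo (0 : ℝ) 1, 0 < radicand α t :=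
    fun t ht => one_pos.trans_le (one_le_radicand hα.le ht.1 ht.2.le)
  refine strictConvexOn_of_hasDerivAt2_pos (convex_Ioo 0 1) isOpen_Ioo
    (fun t ht => hasDerivAt_inv_mul_sqrt_radicand ht.1 (hV t ht))
    (fun t ht => hasDerivAt_deriv_inv_mul_sqrt_radicand ht.1 (hV t ht)) fun t ht => ?_
  have := hV t ht
  have := ht.1
  have : 0 < radicand α t ^ 2 - 3 * α * radicand α t + 6 * α ^ 2 := by
    nlinarith [sq_nonneg (radicand α t - 3 * α / 2)]
  positivity

theorem hasDerivAt_fixedPointDefect (hα : 0 < α) (ht : 0 < t) (ht1 : t ≤ 1) :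
    HasDerivAt (fixedPointDefect lam α β)
      (β * (lam + 1 - 2 * lam * t) + (t * √(radicand α t))⁻¹) t := by
  have hV := one_pos.trans_le (one_le_radicand hα.le ht ht1)
  have hquad :
      HasDerivAt (fun s => β * (lam * s - 1) * (1 - s)) (β * (lam + 1 - 2 * lam * t)) t := by
    refine ((((hasDerivAt_id' t).const_mul lam).sub_const 1 |>.const_mul β).mul
      ((hasDerivAt_id' t).const_sub 1)).congr_deriv ?_
    ring
  refine (hquad.sub ((hasDerivAt_sqrt_radicand ht.ne' hV).sub_const 1 |>.div_const (2 * α)))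
    |>.congr_deriv ?_
  field_simp
  ring

theorem strictConvexOn_deriv_fixedPointDefect (hα : 0 < α) :
    StrictConvexOn ℝ (Ioo 0 1)
      (fun t => β * (lam + 1 - 2 * lam * t) + (t * √(radicand α t))⁻¹) := by
  have haffine : ConvexOn ℝ (Ioo 0 1) (fun t : ℝ => β * (lam + 1 - 2 * lam * t)) :=
    ⟨convex_Ioo 0 1, fun x _ y _ a b _ _ hab => le_of_eq <| by
      simp only [smul_eq_mul]
      linear_combination (-(β * (lam + 1))) * hab⟩
  exact haffine.add_strictConvexOn (strictConvexOn_inv_mul_sqrt_radicand hα)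

theorem invQuadExp_exp (hα : 0 < α) {y : ℝ} (hy : 0 ≤ y) :
    invQuadExp α (exp (-(y * (1 + α * y)))) = y := by
  have hV : radicand α (exp (-(y * (1 + α * y)))) = (1 + 2 * α * y) ^ 2 := by
    rw [radicand, log_exp]
    ring
  rw [invQuadExp, hV, sqrt_sq (by positivity)]
  field_simp
  ring

theorem fixedPointDefect_one : fixedPointDefect lam α β 1 = 0 := by
  simp [fixedPointDefect, invQuadExp, radicand]

theorem fixedPointDefect_exp_eq_zero (hα : 0 < α) {y : ℝ} (hy : 0 ≤ y) (hw : w lam α β y = y) :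
    fixedPointDefect lam α β (exp (-(y * (1 + α * y)))) = 0 := by
  rw [fixedPointDefect, invQuadExp_exp hα hy]
  exact sub_eq_zero.2 hw

theorem strictAntiOn_exp_neg_mul_one_add_mul (hα : 0 ≤ α) :
    StrictAntiOn (fun y => exp (-(y * (1 + α * y)))) (Ici 0) := by
  intro x hx y hy hxy
  simp only [exp_lt_exp, neg_lt_neg_iff]
  have : 0 ≤ α * (x + y) := mul_nonneg hα (add_nonneg hx hy)
  nlinarith

theorem false_of_three_pos_fixedPoints (hα : 0 < α) {y₁ y₂ y₃ : ℝ} (h₁ : 0 < y₁)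
    (h₁₂ : y₁ < y₂) (h₂₃ : y₂ < y₃) (hw₁ : w lam α β y₁ = y₁) (hw₂ : w lam α β y₂ = y₂)
    (hw₃ : w lam α β y₃ = y₃) : False := by
  set τ : ℝ → ℝ := fun y => exp (-(y * (1 + α * y)))
  have hτ := strictAntiOn_exp_neg_mul_one_add_mul hα.le
  have hτ₀ : τ 0 = 1 := by simp [τ]
  have hτ₃ : 0 < τ y₃ := exp_pos _
  have hτ₁₂ : τ y₂ < τ y₁ := hτ h₁.le (h₁.trans h₁₂).le h₁₂
  have hτ₂₃ : τ y₃ < τ y₂ := hτ (h₁.trans h₁₂).le (h₁.trans h₁₂ |>.trans h₂₃).le h₂₃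
  have hτ₁ : τ y₁ < 1 := hτ₀ ▸ hτ (le_refl (0 : ℝ)) h₁.le h₁
  have hderiv : ∀ t ∈ Ioc (0 : ℝ) 1, HasDerivAt (fixedPointDefect lam α β)
      (β * (lam + 1 - 2 * lam * t) + (t * √(radicand α t))⁻¹) t :=
    fun t ht => hasDerivAt_fixedPointDefect hα ht.1 ht.2
  refine false_of_four_zeros_of_strictConvexOn_deriv hτ₂₃ hτ₁₂ hτ₁
    (fun t ht => (hderiv t ⟨hτ₃.trans_le ht.1, ht.2⟩).continuousAt.continuousWithinAt)
    (fun t ht => hderiv t ⟨hτ₃.trans ht.1, ht.2.le⟩)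
    ((strictConvexOn_deriv_fixedPointDefect hα).subset (Ioo_subset_Ioo_left hτ₃.le)
      (convex_Ioo _ _))
    (fixedPointDefect_exp_eq_zero hα (by linarith) hw₃)
    (fixedPointDefect_exp_eq_zero hα (by linarith) hw₂)
    (fixedPointDefect_exp_eq_zero hα h₁.le hw₁) fixedPointDefect_one

end WFixedPoint

theorem w_fixed_point_at_most_two_general (lam α β yc : ℝ) (hα : 0 < α) :
    let w : ℝ → ℝ := fun y =>
      β * (lam * Real.exp (-(y * (1 + α * y))) - 1) * (1 - Real.exp (-(y * (1 + α * y))))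
    ∀ a b c : ℝ, a ∈ Set.Ioo 0 yc → w a = a → b ∈ Set.Ioo 0 yc → w b = b →
      c ∈ Set.Ioo 0 yc → w c = c → a = b ∨ a = c ∨ b = c := by
  intro w a b c ha hwa hb hwb hc hwc
  exact eq_or_eq_or_eq_of_not_lt_lt (P := fun y => 0 < y ∧ WFixedPoint.w lam α β y = y)
    (fun _ _ _ hxy hyz hx hy hz =>
      WFixedPoint.false_of_three_pos_fixedPoints hα hx.1 hxy hyz hx.2 hy.2 hz.2)
    ⟨ha.1, hwa⟩ ⟨hb.1, hwb⟩ ⟨hc.1, hwc⟩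

theorem w_fixed_point_at_most_two (lam α β yc : ℝ) (hlam : 1 < lam) (hα : 0 < α)
    (hα2 : 2 * α > (3 * lam - 1) / (lam - 1)) (hβ : 0 < β)
    (hR0 : 0 < β * (lam - 1)) (hR : β * (lam - 1) < 1)
    (hyc : 0 < yc) (hyceq : yc * (1 + α * yc) = Real.log lam) :
    let w : ℝ → ℝ := fun y =>
      β * (lam * Real.exp (-(y * (1 + α * y))) - 1) * (1 - Real.exp (-(y * (1 + α * y))))
    ∀ a b c : ℝ, a ∈ Set.Ioo 0 yc → w a = a → b ∈ Set.Ioo 0 yc → w b = b →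
      c ∈ Set.Ioo 0 yc → w c = c → a = b ∨ a = c ∨ b = c :=
  w_fixed_point_at_most_two_general lam α β yc hα
end

section
/- Let λ > 1, α > 0 with 2α > 1, and suppose β(λ-1)√(2α) e^{(1-2α)/(4α)} < 1. For small ε ≥ 0 with β(λ-1+ε)√(2α)e^{(1-2α)/(4α)} < 1, define R(z) = β(λ-1+ε)(1 - e^{-z(1+αz)}) - z. Then R(z) < 0 for all z > 0; equivalently β(λ-1+ε)(1 - e^{-z(1+αz)}) < z for all z > 0. -/
lemma aux_u (u : ℝ) : u * Real.exp ((1 - u^2)/2) ≤ 1 := by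
  rcases le_or_gt u 0 with h | h
  · have := Real.exp_pos ((1 - u^2)/2)
    nlinarith
  · have h1 : u ≤ Real.exp ((u^2 - 1)/2) := by
      have := Real.add_one_le_exp ((u^2 - 1)/2)
      nlinarith [sq_nonneg (u - 1)]
    have h2 : (0:ℝ) < Real.exp ((1 - u^2)/2) := Real.exp_pos _
    calc u * Real.exp ((1 - u^2)/2)
        ≤ Real.exp ((u^2 - 1)/2) * Real.exp ((1 - u^2)/2) := by nlinarith
      _ = 1 := by rw [← Real.exp_add]; ring_nf; exact Real.exp_zero

theorem predator_extinction_ineq (lam α β ε : ℝ) (hlam : 1 < lam) (hα : 1 < 2 * α)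
    (hβ : 0 < β) (hε : 0 ≤ ε)
    (hkey : β * (lam - 1 + ε) * Real.sqrt (2 * α) *
      Real.exp ((1 - 2 * α) / (4 * α)) < 1) :
    ∀ z : ℝ, 0 < z →
      β * (lam - 1 + ε) * (1 - Real.exp (-(z * (1 + α * z)))) < z := by
  intro z hz
  set c := β * (lam - 1 + ε) with hc_def
  have hαpos : (0:ℝ) < α := by linarith
  have hc : 0 < c := by
    have : 0 < lam - 1 + ε := by linarith
    positivity
  have hspos : 0 < Real.sqrt (2*α) := Real.sqrt_pos.mpr (by linarith)
  have hs2 : Real.sqrt (2*α) ^ 2 = 2*α := Real.sq_sqrt (by linarith)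
  -- key pointwise derivative bound
  have key : ∀ y : ℝ, c * ((1 + 2*α*y) * Real.exp (-(y*(1+α*y)))) < 1 := by
    intro y
    set s := Real.sqrt (2*α) with hs_def
    set u := (1 + 2*α*y) / s with hu_def
    have hsu : s * u = 1 + 2*α*y := by rw [hu_def]; field_simp
    have hu2 : u^2 = (1 + 2*α*y)^2 / (2*α) := by
      rw [hu_def, div_pow, hs2]
    have hexp_eq : -(y*(1+α*y)) = (1 - u^2)/2 + (1 - 2*α)/(4*α) := by
      rw [hu2]; field_simp; ring
    have h1 : (1 + 2*α*y) * Real.exp (-(y*(1+α*y)))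
        = s * (u * Real.exp ((1 - u^2)/2)) * Real.exp ((1 - 2*α)/(4*α)) := by
      rw [hexp_eq, Real.exp_add, ← hsu]; ring
    have h2 : (1 + 2*α*y) * Real.exp (-(y*(1+α*y)))
        ≤ s * Real.exp ((1 - 2*α)/(4*α)) := by
      rw [h1]
      have hX := aux_u u
      have he : (0:ℝ) ≤ Real.exp ((1 - 2*α)/(4*α)) := (Real.exp_pos _).le
      have h3 := mul_le_mul_of_nonneg_right
        (mul_le_mul_of_nonneg_left hX hspos.le) he
      simpa using h3
    calc c * ((1 + 2*α*y) * Real.exp (-(y*(1+α*y))))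
        ≤ c * (s * Real.exp ((1 - 2*α)/(4*α))) := by nlinarith
      _ < 1 := by rw [hs_def]; linarith [hkey]
  -- the function f and its derivative
  set f : ℝ → ℝ := fun t => c * (1 - Real.exp (-(t*(1+α*t)))) - t with hf_def
  have hderiv : ∀ t : ℝ, HasDerivAt f (c * ((1 + 2*α*t) * Real.exp (-(t*(1+α*t)))) - 1) t := by
    intro t
    have h1 : HasDerivAt (fun y : ℝ => 1 + α * y) α t := by
      simpa using ((hasDerivAt_id' t).const_mul α).const_add 1
    have h2 : HasDerivAt (fun y : ℝ => y * (1 + α*y)) (1*(1+α*t) + t*α) t :=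
      (hasDerivAt_id t).mul h1
    have h3 := (h2.neg).exp
    have h4 := ((hasDerivAt_const t (1:ℝ)).sub h3).const_mul c
    have h5 := h4.sub (hasDerivAt_id t)
    refine h5.congr_deriv ?_
    simp only [Pi.neg_apply]
    ring
  have hanti : StrictAntiOn f (Set.Ici 0) := by
    apply strictAntiOn_of_deriv_neg (convex_Ici 0)
    · apply Continuous.continuousOn
      fun_prop
    · intro t ht
      rw [(hderiv t).deriv]
      linarith [key t]
  have h0 : f 0 = 0 := by simp [hf_def]
  have := hanti (Set.self_mem_Ici) (Set.mem_Ici.mpr hz.le) hz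
  rw [h0] at this
  simp only [hf_def] at this
  linarith
end

section
/- Let λ > 1 and α > 0. Define V(y) = 1 - e^{y(1+αy)}/λ + [2 - (1 - 1/λ)/(1 - e^{-y(1+αy)})] · y(1+2αy) for y ∈ (0, y_c), with y_c(1+αy_c) = ln λ. If 2α ≤ (3λ-1)/(λ-1), then V(y) > 0 for all y ∈ (0, y_c). -/
lemma log_cubic_bound {t : ℝ} (ht : 0 ≤ t) (ht1 : t ≤ 1) :
    Real.log (1 + t) ≤ t - t ^ 2 / 2 + t ^ 3 / 3 := by
  have hu : 0 ≤ t - t ^ 2 / 2 + t ^ 3 / 3 := by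
    nlinarith [mul_nonneg ht (sub_nonneg.2 ht1), pow_nonneg ht 3]
  have h := Real.sum_le_exp_of_nonneg hu 5
  have hs : ∑ i ∈ Finset.range 5, (t - t ^ 2 / 2 + t ^ 3 / 3) ^ i / (Nat.factorial i : ℝ)
      = 1 + (t - t ^ 2 / 2 + t ^ 3 / 3) + (t - t ^ 2 / 2 + t ^ 3 / 3) ^ 2 / 2
        + (t - t ^ 2 / 2 + t ^ 3 / 3) ^ 3 / 6 + (t - t ^ 2 / 2 + t ^ 3 / 3) ^ 4 / 24 := by
    simp [Finset.sum_range_succ, Nat.factorial] <;> ring_nf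
  rw [hs] at h
  have hpoly : 1 + t ≤ 1 + (t - t ^ 2 / 2 + t ^ 3 / 3) + (t - t ^ 2 / 2 + t ^ 3 / 3) ^ 2 / 2
        + (t - t ^ 2 / 2 + t ^ 3 / 3) ^ 3 / 6 + (t - t ^ 2 / 2 + t ^ 3 / 3) ^ 4 / 24 := by
    nlinarith [pow_nonneg ht 4, pow_nonneg ht 5, pow_nonneg ht 6, pow_nonneg ht 7,
      pow_nonneg ht 8, pow_nonneg ht 9, pow_nonneg ht 10, pow_nonneg ht 11,
      pow_nonneg ht 12,
      mul_nonneg (pow_nonneg ht 4) (sub_nonneg.2 ht1),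
      mul_nonneg (pow_nonneg ht 5) (sub_nonneg.2 ht1),
      mul_nonneg (pow_nonneg ht 6) (sub_nonneg.2 ht1),
      mul_nonneg (pow_nonneg ht 7) (sub_nonneg.2 ht1),
      mul_nonneg (pow_nonneg ht 8) (sub_nonneg.2 ht1),
      mul_nonneg (pow_nonneg ht 9) (sub_nonneg.2 ht1),
      mul_nonneg (pow_nonneg ht 10) (sub_nonneg.2 ht1),
      mul_nonneg (pow_nonneg ht 11) (sub_nonneg.2 ht1)]
  rw [Real.log_le_iff_le_exp (by linarith)]
  exact le_trans hpoly h

lemma keyQ {lam t : ℝ} (hlam : 1 < lam) (ht : 0 < t) (hτ : (lam + 1) * t ≤ lam - 1) :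
    (2 * (lam - 1) * (t - t ^ 2 / 2 + t ^ 3 / 3)
        + (3 * lam - 1) * (t - t ^ 2 / 2 + t ^ 3 / 3) ^ 2)
        * ((lam - 1) - (lam + 1) * t)
      < 2 * (lam - 1) * ((lam - 1 - t) * t) := by
  have ht1 : t ≤ 1 := by nlinarith
  have hg : 0 < (13 * lam ^ 2 - 2 * lam + 1) / 3
      - (61 * lam ^ 2 - 20 * lam + 7) / 12 * t
      + (87 * lam ^ 2 + 10 * lam - 13) / 36 * t ^ 2 := by
    nlinarith [mul_nonneg (sub_nonneg.2 hτ) ht.le, sq_nonneg (lam - 1 - (lam + 1) * t),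
      mul_nonneg (sub_nonneg.2 hτ) (sub_nonneg.2 hτ), sq_nonneg t, sq_nonneg (lam - 1),
      mul_nonneg (mul_nonneg (sub_nonneg.2 hτ) ht.le) (by linarith : (0:ℝ) ≤ lam - 1),
      mul_pos (by linarith : (0:ℝ) < lam - 1) ht, sq_nonneg (lam * t - 1),
      mul_nonneg (sub_nonneg.2 ht1) ht.le]
  have hQ : 0 < (13 * lam ^ 2 - 2 * lam + 1) / 3
      - (61 * lam ^ 2 - 20 * lam + 7) / 12 * t
      + (45 * lam ^ 2 + 6 * lam - 7) / 12 * t ^ 2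
      - (12 * lam ^ 2 + 2 * lam - 2) / 9 * t ^ 3
      + (3 * lam ^ 2 + 2 * lam - 1) / 9 * t ^ 4 := by
    have h1 : 0 ≤ (3 * lam ^ 2 + 2 * lam - 1) / 9 * t ^ 4 := by
      apply mul_nonneg _ (pow_nonneg ht.le 4); nlinarith
    have h2 : (12 * lam ^ 2 + 2 * lam - 2) / 9 * t ^ 3
        ≤ (12 * lam ^ 2 + 2 * lam - 2) / 9 * t ^ 2 := by
      apply mul_le_mul_of_nonneg_left _ (by nlinarith)
      nlinarith [sq_nonneg t, mul_nonneg (mul_nonneg ht.le ht.le) (sub_nonneg.2 ht1)]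
    nlinarith [hg]
  nlinarith [mul_pos (mul_pos (mul_pos ht ht) ht) hQ]

set_option maxHeartbeats 1600000 in
theorem V_pos (lam α yc : ℝ) (hlam : 1 < lam) (hα : 0 < α)
    (hα2 : 2 * α ≤ (3 * lam - 1) / (lam - 1))
    (hyc : 0 < yc) (hyceq : yc * (1 + α * yc) = Real.log lam) :
    ∀ y ∈ Set.Ioo 0 yc,
      0 < 1 - Real.exp (y * (1 + α * y)) / lam +
        (2 - (1 - 1 / lam) / (1 - Real.exp (-(y * (1 + α * y))))) *
          (y * (1 + 2 * α * y)) := by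
  rintro y ⟨hy0, hyyc⟩
  have hlam0 : (0 : ℝ) < lam := by linarith
  obtain ⟨g, hg_def⟩ : ∃ g : ℝ, g = y * (1 + α * y) := ⟨_, rfl⟩
  have hg0 : 0 < g := by nlinarith [mul_pos (mul_pos hα hy0) hy0]
  have hgy : y ≤ g := by nlinarith [mul_nonneg (mul_nonneg hα.le hy0.le) hy0.le]
  have hglt : g < Real.log lam := by
    rw [← hyceq]
    nlinarith [mul_pos hα (mul_pos (by linarith : (0:ℝ) < yc - y)
      (by linarith : (0:ℝ) < yc + y))]
  obtain ⟨E, hE_def⟩ : ∃ E : ℝ, E = Real.exp g := ⟨_, rfl⟩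
  have hE1 : 1 < E := by
    rw [hE_def, ← Real.exp_zero]; exact Real.exp_lt_exp.2 hg0
  have hElam : E < lam := by
    rw [hE_def, ← Real.exp_log hlam0]; exact Real.exp_lt_exp.2 hglt
  have hEpos : (0 : ℝ) < E := by linarith
  have hEm1 : (0 : ℝ) < E - 1 := by linarith
  have hK : 2 * α * (lam - 1) ≤ 3 * lam - 1 := by
    have h := (le_div_iff₀ (by linarith : (0:ℝ) < lam - 1)).mp hα2
    linarith
  obtain ⟨W, hW_def⟩ : ∃ W : ℝ,
      W = (lam - E) * (E - 1) + (2 * g - y) * ((lam + 1) * E - 2 * lam) := ⟨_, rfl⟩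
  have hW : 0 < W := by
    rcases le_or_gt (2 * lam) ((lam + 1) * E) with hcase | hcase
    · have hm : 0 < 2 * g - y := by linarith
      have h1 : 0 < (lam - E) * (E - 1) := mul_pos (by linarith) hEm1
      have h2 : 0 ≤ (2 * g - y) * ((lam + 1) * E - 2 * lam) :=
        mul_nonneg hm.le (by linarith)
      rw [hW_def]; linarith
    · have ht0 : 0 < E - 1 := hEm1
      have hτ : (lam + 1) * (E - 1) ≤ lam - 1 := by nlinarith
      have ht1 : E - 1 ≤ 1 := by nlinarith
      obtain ⟨u, hu_def⟩ : ∃ u : ℝ,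
          u = E - 1 - (E - 1) ^ 2 / 2 + (E - 1) ^ 3 / 3 := ⟨_, rfl⟩
      have hgu : g ≤ u := by
        have hlb := log_cubic_bound ht0.le ht1
        have hlg : Real.log (1 + (E - 1)) = g := by
          rw [show (1 : ℝ) + (E - 1) = E by ring, hE_def, Real.log_exp]
        rw [hlg, ← hu_def] at hlb
        exact hlb
      have hu0 : 0 < u := lt_of_lt_of_le hg0 hgu
      have hm : 2 * (lam - 1) * (2 * g - y) ≤ 2 * (lam - 1) * g + (3 * lam - 1) * g ^ 2 := by
        have h1 : g - y = α * y ^ 2 := by rw [hg_def]; ring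
        have h2 : 2 * (lam - 1) * (g - y) ≤ (3 * lam - 1) * y ^ 2 := by
          rw [h1]
          nlinarith [mul_le_mul_of_nonneg_right hK (sq_nonneg y)]
        have h3 : (3 * lam - 1) * y ^ 2 ≤ (3 * lam - 1) * g ^ 2 := by
          apply mul_le_mul_of_nonneg_left _ (by linarith)
          nlinarith
        nlinarith
      have hmono : 2 * (lam - 1) * g + (3 * lam - 1) * g ^ 2
          ≤ 2 * (lam - 1) * u + (3 * lam - 1) * u ^ 2 := by
        nlinarith [mul_nonneg (sub_nonneg.2 hgu)
          (by nlinarith : (0:ℝ) ≤ 2 * (lam - 1) + (3 * lam - 1) * (u + g))]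
      have hD : (0 : ℝ) ≤ (lam - 1) - (lam + 1) * (E - 1) := by nlinarith
      have hkq := keyQ hlam ht0 hτ
      rw [← hu_def] at hkq
      have hchain : 2 * (lam - 1) * (2 * g - y) * ((lam - 1) - (lam + 1) * (E - 1))
          ≤ (2 * (lam - 1) * u + (3 * lam - 1) * u ^ 2)
            * ((lam - 1) - (lam + 1) * (E - 1)) := by
        apply mul_le_mul_of_nonneg_right _ hD
        linarith
      have hfin : 2 * (lam - 1) * (2 * g - y) * ((lam - 1) - (lam + 1) * (E - 1))
          < 2 * (lam - 1) * ((lam - 1 - (E - 1)) * (E - 1)) := lt_of_le_of_lt hchain hkq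
      have hWmul : 0 < 2 * (lam - 1) * W := by
        have hWeq : 2 * (lam - 1) * W
            = 2 * (lam - 1) * ((lam - 1 - (E - 1)) * (E - 1))
              - 2 * (lam - 1) * (2 * g - y) * ((lam - 1) - (lam + 1) * (E - 1)) := by
          rw [hW_def]; ring
        rw [hWeq]; linarith
      by_contra hWn
      push_neg at hWn
      nlinarith [mul_nonneg (by linarith : (0:ℝ) ≤ 2 * (lam - 1)) (neg_nonneg.2 hWn)]
  -- convert to the target
  have h1E : (1 : ℝ) - E⁻¹ ≠ 0 := by
    have : E⁻¹ < 1 := inv_lt_one_of_one_lt₀ hE1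
    intro hcon; rw [sub_eq_zero] at hcon; rw [← hcon] at this; exact lt_irrefl _ this
  have hm_eq : y * (1 + 2 * α * y) = 2 * g - y := by rw [hg_def]; ring
  have hfactor : lam * (E - 1) *
      (1 - Real.exp (y * (1 + α * y)) / lam +
        (2 - (1 - 1 / lam) / (1 - Real.exp (-(y * (1 + α * y))))) *
          (y * (1 + 2 * α * y))) = W := by
    rw [hm_eq, ← hg_def, Real.exp_neg, ← hE_def, hW_def]
    field_simp
    ring
  have hprod : 0 < lam * (E - 1) := mul_pos hlam0 hEm1
  by_contra hT
  push_neg at hT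
  have hle : lam * (E - 1) *
      (1 - Real.exp (y * (1 + α * y)) / lam +
        (2 - (1 - 1 / lam) / (1 - Real.exp (-(y * (1 + α * y))))) *
          (y * (1 + 2 * α * y))) ≤ 0 := mul_nonpos_of_nonneg_of_nonpos hprod.le hT
  rw [hfactor] at hle
  linarith
end

section
/- Let λ > 1 and α > 0 with 2α > (3λ-1)/(λ-1). Define V(y) = 1 - e^{y(1+αy)}/λ + [2 - (1 - 1/λ)/(1 - e^{-y(1+αy)})] y(1+2αy) on (0, y_c), with y_c(1+αy_c) = ln λ. Then there exists a unique y_t ∈ (0, y_c) such that V < 0 on (0, y_t) and V > 0 on (y_t, y_c). -/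
/-!
Write `E = e^{y(1+αy)}` and `h = y(1+2αy)`. Clearing denominators, `λ(E - 1) V = Φ` with
`Φ = (E - 1)(λ - E) + h((λ + 1)E - 2λ)`, so on `(0, y_c)` the function `V` has the sign of
`Φ(y)/y²`.
Since `Φ(0) = Φ'(0) = 0` and `Φ''(0) = 3λ - 1 - 2α(λ - 1) < 0`, `Φ` is negative just right of `0`,
while `E = λ` at `y_c` gives `Φ(y_c) = λ(λ - 1)h > 0`. Finally `yΦ' - 2Φ > 0` on `(0, y_c)`, which
rests on `2(e^x - 1) < x(e^x + 1)` for `x > 0`; hence `Φ/y²` is strictly increasing and changes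
sign exactly once.
-/

open Set Filter Topology

lemma two_mul_exp_sub_one_lt {x : ℝ} (hx : 0 < x) :
    2 * (Real.exp x - 1) < x * (Real.exp x + 1) := by
  let u : ℝ → ℝ := fun t => t * (Real.exp t + 1) - 2 * (Real.exp t - 1)
  have hu : ∀ t, HasDerivAt u (1 - Real.exp t * (1 - t)) t := fun t => by
    refine (((hasDerivAt_id' t).mul ((Real.hasDerivAt_exp t).add_const 1)).sub
      (((Real.hasDerivAt_exp t).sub_const 1).const_mul 2)).congr_deriv ?_
    ring
  have hmono : StrictMonoOn u (Ici 0) := by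
    refine strictMonoOn_of_deriv_pos (convex_Ici 0)
      (fun t _ => (hu t).continuousAt.continuousWithinAt) fun t ht => ?_
    rw [interior_Ici, mem_Ioi] at ht
    rw [(hu t).deriv]
    have h := Real.one_sub_lt_exp_neg ht.ne'
    have hinv : Real.exp t * Real.exp (-t) = 1 := by
      rw [← Real.exp_add, add_neg_cancel, Real.exp_zero]
    nlinarith [Real.exp_pos t]
  have := hmono self_mem_Ici hx.le hx
  simp only [u, Real.exp_zero] at this
  linarith

lemma exp_mul_one_sub_le (x : ℝ) : Real.exp x * (1 - x) ≤ 1 := by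
  have h := Real.one_sub_le_exp_neg x
  have hinv : Real.exp x * Real.exp (-x) = 1 := by
    rw [← Real.exp_add, add_neg_cancel, Real.exp_zero]
  nlinarith [Real.exp_pos x]

lemma eventually_nhdsGT_lt_of_deriv_neg {f : ℝ → ℝ} {x₀ : ℝ} (hf : ContinuousAt f x₀)
    (hderiv : ∀ᶠ x in 𝓝[>] x₀, deriv f x < 0) : ∀ᶠ x in 𝓝[>] x₀, f x < f x₀ := by
  obtain ⟨u, hu, hsub⟩ := (mem_nhdsGT_iff_exists_Ioo_subset' (lt_add_one x₀)).mp hderiv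
  filter_upwards [Ioo_mem_nhdsGT hu] with x hx
  have hcont : ContinuousOn f (Icc x₀ x) := fun z hz => by
    rcases hz.1.eq_or_lt with rfl | hz₀
    · exact hf.continuousWithinAt
    · exact (differentiableAt_of_deriv_ne_zero
        (hsub ⟨hz₀, hz.2.trans_lt hx.2⟩).ne).continuousAt.continuousWithinAt
  have hanti : StrictAntiOn f (Icc x₀ x) := by
    refine strictAntiOn_of_deriv_neg (convex_Icc _ _) hcont fun z hz => hsub ?_
    rw [interior_Icc] at hz
    exact ⟨hz.1, hz.2.trans hx.2⟩
  exact hanti (left_mem_Icc.2 hx.1.le) (right_mem_Icc.2 hx.1.le) hx.1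

lemma StrictMonoOn.exists_sign_change {q : ℝ → ℝ} {a b : ℝ} (hq : StrictMonoOn q (Ioo a b))
    (hneg : ∃ y ∈ Ioo a b, q y < 0) (hpos : ∃ y ∈ Ioo a b, 0 < q y) :
    ∃ t ∈ Ioo a b, (∀ y ∈ Ioo a t, q y < 0) ∧ ∀ y ∈ Ioo t b, 0 < q y := by
  obtain ⟨y₁, hy₁, hq₁⟩ := hneg
  obtain ⟨y₂, hy₂, hq₂⟩ := hpos
  set N := {y ∈ Ioo a b | q y < 0}
  have hN : y₁ ∈ N := ⟨hy₁, hq₁⟩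
  have hbelow : ∀ y ∈ N, y < y₂ := fun y hy => (hq.lt_iff_lt hy.1 hy₂).mp (hy.2.trans hq₂)
  have hbdd : BddAbove N := ⟨y₂, fun y hy => (hbelow y hy).le⟩
  have ha : a < sSup N := hy₁.1.trans_le (le_csSup hbdd hN)
  refine ⟨sSup N, ⟨ha, (csSup_le ⟨y₁, hN⟩ fun y hy => (hbelow y hy).le).trans_lt hy₂.2⟩,
    fun y hy => ?_, fun y hy => ?_⟩
  · obtain ⟨z, hz, hyz⟩ := exists_lt_of_lt_csSup ⟨y₁, hN⟩ hy.2
    exact (hq ⟨hy.1, hyz.trans hz.1.2⟩ hz.1 hyz).trans hz.2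
  · obtain ⟨w, hNw, hwy⟩ := exists_between hy.1
    have hw : w ∈ Ioo a b := ⟨ha.trans hNw, hwy.trans hy.2⟩
    have hqw : 0 ≤ q w := not_lt.mp fun h => (le_csSup hbdd ⟨hw, h⟩).not_gt hNw
    exact hqw.trans_lt (hq hw ⟨hw.1.trans hwy, hy.2⟩ hwy)

lemma eq_of_sign_change {f : ℝ → ℝ} {a b s t : ℝ} (hs : s ∈ Ioo a b) (ht : t ∈ Ioo a b)
    (hfs : (∀ y ∈ Ioo a s, f y < 0) ∧ ∀ y ∈ Ioo s b, 0 < f y)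
    (hft : (∀ y ∈ Ioo a t, f y < 0) ∧ ∀ y ∈ Ioo t b, 0 < f y) : s = t := by
  have key : ∀ {s t}, a < s → t < b → (∀ y ∈ Ioo s b, 0 < f y) → (∀ y ∈ Ioo a t, f y < 0) →
      t ≤ s := fun has htb hpos hneg => not_lt.mp fun hst => by
    obtain ⟨m, hsm, hmt⟩ := exists_between hst
    exact (hneg m ⟨has.trans hsm, hmt⟩).not_gt (hpos m ⟨hsm, hmt.trans htb⟩)
  exact le_antisymm (key ht.1 hs.2 hft.2 hfs.1) (key hs.1 ht.2 hfs.2 hft.1)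

lemma existsUnique_sign_change_of_sign_eq {f q : ℝ → ℝ} {a b : ℝ}
    (hq : StrictMonoOn q (Ioo a b))
    (hfq : ∀ y ∈ Ioo a b, SignType.sign (f y) = SignType.sign (q y))
    (hneg : ∃ y ∈ Ioo a b, q y < 0) (hpos : ∃ y ∈ Ioo a b, 0 < q y) :
    ∃! t, t ∈ Ioo a b ∧ (∀ y ∈ Ioo a t, f y < 0) ∧ ∀ y ∈ Ioo t b, 0 < f y := by
  obtain ⟨t, ht, hqneg, hqpos⟩ := hq.exists_sign_change hneg hpos
  have hsub : ∀ {y}, y ∈ Ioo a t ∨ y ∈ Ioo t b → y ∈ Ioo a b := by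
    rintro y (hy | hy)
    exacts [⟨hy.1, hy.2.trans ht.2⟩, ⟨ht.1.trans hy.1, hy.2⟩]
  have hfneg : ∀ y ∈ Ioo a t, f y < 0 := fun y hy => by
    rw [← sign_eq_neg_one_iff, hfq y (hsub (.inl hy)), sign_eq_neg_one_iff]
    exact hqneg y hy
  have hfpos : ∀ y ∈ Ioo t b, 0 < f y := fun y hy => by
    rw [← sign_eq_one_iff, hfq y (hsub (.inr hy)), sign_eq_one_iff]
    exact hqpos y hy
  exact ⟨t, ⟨ht, hfneg, hfpos⟩, fun s hs => eq_of_sign_change hs.1 ht hs.2 ⟨hfneg, hfpos⟩⟩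

noncomputable section

-- `λ (e^{y(1+αy)} - 1) V(y)`
def Phi (lam α y : ℝ) : ℝ :=
  (Real.exp (y * (1 + α * y)) - 1) * (lam - Real.exp (y * (1 + α * y))) +
    y * (1 + 2 * α * y) * ((lam + 1) * Real.exp (y * (1 + α * y)) - 2 * lam)

def Phi' (lam α y : ℝ) : ℝ :=
  Real.exp (y * (1 + α * y)) * (1 + 2 * α * y) * (lam + 1 - 2 * Real.exp (y * (1 + α * y))) +
    (1 + 4 * α * y) * ((lam + 1) * Real.exp (y * (1 + α * y)) - 2 * lam) +
    (lam + 1) * (y * (1 + 2 * α * y)) * (Real.exp (y * (1 + α * y)) * (1 + 2 * α * y))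

end

lemma hasDerivAt_exp_mul_one_add_mul (α y : ℝ) :
    HasDerivAt (fun y => Real.exp (y * (1 + α * y)))
      (Real.exp (y * (1 + α * y)) * (1 + 2 * α * y)) y := by
  refine ((hasDerivAt_id' y).mul ((hasDerivAt_id' y).const_mul α |>.const_add 1)).exp
    |>.congr_deriv ?_
  simp only [Pi.mul_apply]
  ring

lemma hasDerivAt_mul_one_add_two_mul (α y : ℝ) :
    HasDerivAt (fun y => y * (1 + 2 * α * y)) (1 + 4 * α * y) y := by
  refine ((hasDerivAt_id' y).mul ((hasDerivAt_id' y).const_mul (2 * α) |>.const_add 1))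
    |>.congr_deriv ?_
  ring

lemma hasDerivAt_Phi (lam α y : ℝ) : HasDerivAt (Phi lam α) (Phi' lam α y) y := by
  have hE := hasDerivAt_exp_mul_one_add_mul α y
  refine (((hE.sub_const 1).mul (hE.const_sub lam)).add
    ((hasDerivAt_mul_one_add_two_mul α y).mul ((hE.const_mul (lam + 1)).sub_const (2 * lam))))
    |>.congr_deriv ?_
  simp only [Phi']
  ring

lemma hasDerivAt_Phi'_zero (lam α : ℝ) :
    HasDerivAt (Phi' lam α) (3 * lam - 1 - 2 * α * (lam - 1)) 0 := by
  have hE := hasDerivAt_exp_mul_one_add_mul α 0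
  have hlin : ∀ c : ℝ, HasDerivAt (fun y => 1 + c * α * y) (c * α) 0 := fun c =>
    (hasDerivAt_id' 0).const_mul (c * α) |>.const_add 1 |>.congr_deriv (mul_one _)
  refine ((((hE.mul (hlin 2)).mul ((hE.const_mul 2).const_sub (lam + 1))).add
    ((hlin 4).mul ((hE.const_mul (lam + 1)).sub_const (2 * lam)))).add
    (((hasDerivAt_mul_one_add_two_mul α 0).const_mul (lam + 1)).mul (hE.mul (hlin 2))))
    |>.congr_deriv ?_
  simp only [mul_zero, add_zero, mul_one, Real.exp_zero, one_mul, Pi.mul_apply, mul_neg,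
    zero_mul]
  ring

lemma Phi_zero (lam α : ℝ) : Phi lam α 0 = 0 := by simp [Phi]

lemma Phi'_zero (lam α : ℝ) : Phi' lam α 0 = 0 := by
  simp only [Phi', mul_zero, add_zero, mul_one, Real.exp_zero, one_mul]
  ring

lemma continuous_Phi (lam α : ℝ) : Continuous (Phi lam α) := by
  unfold Phi; fun_prop

lemma Phi_pos_of_exp_eq {lam α y : ℝ} (hlam : 1 < lam) (hα : 0 ≤ α) (hy : 0 < y)
    (hE : Real.exp (y * (1 + α * y)) = lam) : 0 < Phi lam α y := by
  rw [Phi, hE]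
  have : 0 < y * (1 + 2 * α * y) * (lam * (lam - 1)) := by
    have : 0 < lam - 1 := sub_pos.2 hlam
    positivity
  linarith

lemma two_mul_Phi_lt_mul_Phi' {lam α y : ℝ} (hα : 0 ≤ α) (hy : 0 < y)
    (hE : Real.exp (y * (1 + α * y)) < lam) : 2 * Phi lam α y < y * Phi' lam α y := by
  set x := y * (1 + α * y)
  set h := y * (1 + 2 * α * y)
  set E := Real.exp x
  have hx : 0 < x := by positivity
  have hxh : x ≤ h := by
    have := mul_nonneg hα (sq_nonneg y)
    simp only [x, h]
    nlinarith
  have hE1 : 1 < E := Real.one_lt_exp_iff.2 hx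
  have htanh := two_mul_exp_sub_one_lt hx
  -- the sum of `x (e^x + 1) - 2 (e^x - 1)`, `x (1 - e^x (1 - x))`
  -- and `(h - x) (e^x (h + x + 2) - 2)`
  have hA : 0 < E * (h ^ 2 + 2 * h - 2 - 2 * x) + 2 + 4 * x - 2 * h := by
    have h₁ : 0 ≤ x * (1 - E * (1 - x)) := mul_nonneg hx.le (by linarith [exp_mul_one_sub_le x])
    have h₂ : 0 ≤ (h - x) * (E * (h + x + 2) - 2) := mul_nonneg (by linarith) (by nlinarith)
    nlinarith
  have hB : 2 * x * (E - 1) < (1 + E) * h ^ 2 := by nlinarith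
  have hid : y * Phi' lam α y - 2 * Phi lam α y =
      (lam - E) * (E * (h ^ 2 + 2 * h - 2 - 2 * x) + 2 + 4 * x - 2 * h) +
        E * ((1 + E) * h ^ 2 - 2 * x * (E - 1)) := by
    simp only [Phi, Phi', x, h, E]
    ring
  nlinarith [mul_pos (sub_pos.2 hE) hA, mul_pos (by positivity : 0 < E) (sub_pos.2 hB)]

lemma Phi_div_sq_strictMonoOn {lam α yc : ℝ} (hlam : 0 < lam) (hα : 0 ≤ α)
    (hyc : yc * (1 + α * yc) = Real.log lam) :
    StrictMonoOn (fun y => Phi lam α y / y ^ 2) (Ioo 0 yc) := by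
  refine strictMonoOn_of_deriv_pos (convex_Ioo 0 yc)
    (fun y hy => ((continuous_Phi lam α).continuousAt.div (continuousAt_pow y 2)
      (pow_pos hy.1 2).ne').continuousWithinAt) fun y hy => ?_
  rw [interior_Ioo] at hy
  obtain ⟨hy₀, hyc'⟩ := hy
  have hE : Real.exp (y * (1 + α * y)) < lam := by
    rw [← Real.exp_log hlam, ← hyc, Real.exp_lt_exp]
    have : 0 ≤ α * (y + yc) := mul_nonneg hα (by linarith)
    nlinarith [mul_pos (sub_pos.2 hyc') (by linarith : 0 < 1 + α * (y + yc))]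
  have hd : HasDerivAt (fun y => Phi lam α y / y ^ 2)
      ((Phi' lam α y * y ^ 2 - Phi lam α y * (↑2 * y ^ (2 - 1))) / (y ^ 2) ^ 2) y :=
    (hasDerivAt_Phi lam α y).div (hasDerivAt_pow 2 y) (pow_pos hy₀ 2).ne'
  have hnum : Phi' lam α y * y ^ 2 - Phi lam α y * (↑2 * y ^ (2 - 1)) =
      y * (y * Phi' lam α y - 2 * Phi lam α y) := by
    ring
  have hkey := sub_pos.2 (two_mul_Phi_lt_mul_Phi' hα hy₀ hE)
  rw [hd.deriv, hnum]
  positivity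

lemma Phi_eventually_neg {lam α : ℝ} (hc : 3 * lam - 1 < 2 * α * (lam - 1)) :
    ∀ᶠ y in 𝓝[>] 0, Phi lam α y < 0 := by
  have hderiv : deriv (Phi lam α) = Phi' lam α := funext fun y => (hasDerivAt_Phi lam α y).deriv
  have hsign := eventually_nhdsWithin_sign_eq_of_deriv_neg
    ((hasDerivAt_Phi'_zero lam α).deriv ▸ sub_neg.2 hc) (Phi'_zero lam α)
  have hneg := deriv_neg_right_of_sign_deriv (f := Phi lam α) (hderiv ▸ nhdsWithin_le_nhds hsign)
  simpa only [Phi_zero] using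
    eventually_nhdsGT_lt_of_deriv_neg (continuous_Phi lam α).continuousAt hneg

lemma mul_exp_sub_one_eq {lam x h : ℝ} (hlam : lam ≠ 0) (hx : x ≠ 0) :
    (1 - Real.exp x / lam + (2 - (1 - 1 / lam) / (1 - Real.exp (-x))) * h) *
        (lam * (Real.exp x - 1)) =
      (Real.exp x - 1) * (lam - Real.exp x) + h * ((lam + 1) * Real.exp x - 2 * lam) := by
  have hE : Real.exp x - 1 ≠ 0 := sub_ne_zero.2 (Real.exp_eq_one_iff x |>.not.2 hx)
  rw [Real.exp_neg]
  field_simp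
  ring

lemma sign_V_eq_sign_Phi_div_sq {lam α y : ℝ} (hlam : 0 < lam) (hα : 0 ≤ α) (hy : 0 < y) :
    SignType.sign (1 - Real.exp (y * (1 + α * y)) / lam +
        (2 - (1 - 1 / lam) / (1 - Real.exp (-(y * (1 + α * y))))) * (y * (1 + 2 * α * y))) =
      SignType.sign (Phi lam α y / y ^ 2) := by
  have hx : 0 < y * (1 + α * y) := by positivity
  have hc : 0 < lam * (Real.exp (y * (1 + α * y)) - 1) / y ^ 2 := by
    have := sub_pos.2 (Real.one_lt_exp_iff.2 hx)
    positivity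
  rw [Phi, ← mul_exp_sub_one_eq hlam.ne' hx.ne', mul_div_assoc, sign_mul, sign_pos hc, mul_one]

theorem V_sign_change (lam α yc : ℝ) (hlam : 1 < lam) (hα : 0 < α)
    (hα2 : 2 * α > (3 * lam - 1) / (lam - 1))
    (hyc : 0 < yc) (hyceq : yc * (1 + α * yc) = Real.log lam) :
    let V : ℝ → ℝ := fun y =>
      1 - Real.exp (y * (1 + α * y)) / lam +
        (2 - (1 - 1 / lam) / (1 - Real.exp (-(y * (1 + α * y))))) *
          (y * (1 + 2 * α * y))
    ∃! yt : ℝ, yt ∈ Set.Ioo 0 yc ∧ (∀ y ∈ Set.Ioo 0 yt, V y < 0) ∧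
      (∀ y ∈ Set.Ioo yt yc, 0 < V y) := by
  intro V
  have hlam₀ : 0 < lam := by linarith
  have hc : 3 * lam - 1 < 2 * α * (lam - 1) := by
    rwa [gt_iff_lt, div_lt_iff₀ (sub_pos.2 hlam)] at hα2
  have hEyc : Real.exp (yc * (1 + α * yc)) = lam := by rw [hyceq, Real.exp_log hlam₀]
  obtain ⟨y₁, hΦ₁, hy₁⟩ := ((Phi_eventually_neg hc).and (Ioo_mem_nhdsGT hyc)).exists
  have hΦyc := (continuous_Phi lam α).continuousAt.eventually
    (eventually_gt_nhds (Phi_pos_of_exp_eq hlam hα.le hyc hEyc))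
  obtain ⟨y₂, hΦ₂, hy₂⟩ := ((hΦyc.filter_mono nhdsWithin_le_nhds).and (Ioo_mem_nhdsLT hyc)).exists
  exact existsUnique_sign_change_of_sign_eq (Phi_div_sq_strictMonoOn hlam₀ hα.le hyceq)
    (fun y hy => sign_V_eq_sign_Phi_div_sq hlam₀ hα.le hy.1)
    ⟨y₁, hy₁, div_neg_of_neg_of_pos hΦ₁ (pow_pos hy₁.1 2)⟩ ⟨y₂, hy₂, div_pos hΦ₂ (pow_pos hy₂.1 2)⟩
end
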